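/- arXiv:2109.05391 — 10 statements merged into one kernel-verified Lean document; each statement's English description precedes it below -/
import Mathlib

section
/- Let ξ be an ℝ^m-valued random vector on a probability space and g : ℝ^m × ℝ^n → ℝ be such that g(ξ,x) is integrable for every x. Suppose there is a neighborhood X of a point x̂ ∈ ℝ^n such that: (a) for each x ∈ X there is a measurable set Ξ ⊂ ℝ^m with prob{ξ ∈ Ξ} = 1 such that g(ξ,·) is continuously differentiable at x for every ξ ∈ Ξ; (b) there are ε > 0 and δ ∈ (0,1] with prob{g(ξ,x) ≥ ε} ≥ δ for all x ∈ X; (c) there is a measurable h : ℝ^m → [0,∞) with E[h(ξ)] < ∞ and |g(ξ,x)| ≤ h(ξ) for all ξ ∈ ℝ^m, x ∈ X; (d) there is a measurable κ : ℝ^m → [0,∞) with E[κ(ξ)] < ∞ and |g(ξ,x) − g(ξ,x′)| ≤ κ(ξ)·‖x − x′‖₂ for all x, x′ ∈ X and ξ ∈ ℝ^m; (e) for every γ > 0 and x ∈ X, prob{γ·g(ξ,x) = −1} = 0; and (f) the minimizer set Γ(x̂) consists of a single point γ̂. Then the function p̄(x) = inf_{γ ≥ 0} E[max(0, γ·g(ξ,x)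 + 1)] is differentiable at x̂ with gradient ∇p̄(x̂) = E[F(ξ, x̂, γ̂)], where F(ξ, x̂, γ̂) = 0 if γ̂·g(ξ,x̂) + 1 ≤ 0 and F(ξ, x̂, γ̂) = γ̂·∇ₓg(ξ,x̂) otherwise. -/
/-!
`p̄(x) = min_{γ ≥ 0} ψ(x, γ)` is the value function of the Norton–Uryasev objective
`ψ(x, γ) = E[max(0, γ g(ξ,x) + 1)]`, and the gradient formula is an envelope (Danskin) theorem.
By (b), `ψ(x, γ) ≥ (γε + 1)δ`, so for `x ∈ X` minimizers `γ(x)` exist in `[0, 1/(δε)]`.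
Since `|ψ(x, γ) - ψ(x̂, γ)| ≤ |γ| E[κ(ξ)] ‖x - x̂‖`, they are approximate minimizers of `ψ(x̂, ·)`,
hence converge to its unique minimizer `γ̂`. Then
`ψ(x, γ(x)) - ψ(x̂, γ(x)) ≤ p̄(x) - p̄(x̂) ≤ ψ(x, γ̂) - ψ(x̂, γ̂)`,
and both bounds are `⟪E[F], x - x̂⟫ + o(‖x - x̂‖)` by dominated convergence, with a multiple of
`κ(ξ)` as dominating function: by (e), almost surely `γ̂ g(ξ,x̂) + 1 ≠ 0`, so for `x` near `x̂`
both hinge terms `max(0, γ g(ξ,·) + 1)` sit on the same linear piece.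
-/

open MeasureTheory Filter Topology Set
open scoped InnerProductSpace

theorem abs_max_zero_add_one_sub_le (a b : ℝ) : |max 0 (a + 1) - max 0 (b + 1)| ≤ |a - b| := by
  have h := abs_max_sub_max_le_abs (a + 1) (b + 1) 0
  rwa [max_comm (a + 1), max_comm (b + 1), add_sub_add_right_eq_sub] at h

theorem abs_integral_sub_integral_le {Ω : Type*} [MeasurableSpace Ω] {P : Measure Ω}
    {f f' B : Ω → ℝ} (hf : Integrable f P) (hf' : Integrable f' P) (hB : Integrable B P)
    (h : ∀ᵐ ω ∂P, |f ω - f' ω| ≤ B ω) :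
    |∫ ω, f ω ∂P - ∫ ω, f' ω ∂P| ≤ ∫ ω, B ω ∂P := by
  rw [← integral_sub hf hf']
  exact abs_integral_le_integral_abs.trans (integral_mono_ae (hf.sub hf').abs hB h)

theorem IsCompact.tendsto_of_tendsto_comp {X Y ι : Type*} [TopologicalSpace X]
    [TopologicalSpace Y] [T2Space Y] {K : Set X} (hK : IsCompact K) {φ : X → Y}
    (hφ : Continuous φ) {a : X} (ha : ∀ b ∈ K, φ b = φ a → b = a) {u : ι → X} {l : Filter ι}
    (hu : ∀ᶠ i in l, u i ∈ K) (h : Tendsto (φ ∘ u) l (𝓝 (φ a))) : Tendsto u l (𝓝 a) :=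
  hK.tendsto_nhds_of_unique_mapClusterPt hu fun b hb hcl =>
    ha b hb <| eq_of_nhds_neBot <| Filter.NeBot.mono
      (show (𝓝 (φ b) ⊓ map (φ ∘ u) l).NeBot from hcl.tendsto_comp hφ.continuousAt)
      (inf_le_inf_left _ h)

section NortonUryasev

variable {Ω E : Type*} [MeasurableSpace Ω] {P : Measure Ω}

noncomputable def nuObjective (P : Measure Ω) (G : Ω → E → ℝ) (x : E) (γ : ℝ) : ℝ :=
  ∫ ω, max 0 (γ * G ω x + 1) ∂P

def nuArgmin (P : Measure Ω) (G : Ω → E → ℝ) (x : E) : Set ℝ :=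
  {γ | 0 ≤ γ ∧ IsMinOn (nuObjective P G x) (Ici 0) γ}

noncomputable def bufferedFailureProb (P : Measure Ω) (G : Ω → E → ℝ) (x : E) : ℝ :=
  ⨅ γ : Ici (0 : ℝ), nuObjective P G x γ

variable {G : Ω → E → ℝ}

theorem nuObjective_nonneg (x : E) (γ : ℝ) : 0 ≤ nuObjective P G x γ :=
  integral_nonneg fun _ => le_max_left _ _

theorem bufferedFailureProb_eq_of_isMinOn {x : E} {γ : ℝ} (hγ : 0 ≤ γ)
    (hmin : IsMinOn (nuObjective P G x) (Ici 0) γ) :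
    bufferedFailureProb P G x = nuObjective P G x γ :=
  hmin.iInf_eq hγ

theorem bufferedFailureProb_le_nuObjective (x : E) {γ : ℝ} (hγ : 0 ≤ γ) :
    bufferedFailureProb P G x ≤ nuObjective P G x γ :=
  ciInf_le ⟨0, by rintro _ ⟨γ, rfl⟩; exact nuObjective_nonneg x γ⟩ (⟨γ, hγ⟩ : Ici (0 : ℝ))

variable [IsFiniteMeasure P]

theorem integrable_max_zero_mul_add_one {f : Ω → ℝ} (hf : Integrable f P) (γ : ℝ) :
    Integrable (fun ω => max 0 (γ * f ω + 1)) P :=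
  (integrable_zero Ω ℝ P).sup ((hf.const_mul γ).add (integrable_const 1))

theorem continuous_nuObjective {x : E} (hG : Integrable (G · x) P) :
    Continuous (nuObjective P G x) := by
  refine (LipschitzWith.of_dist_le_mul fun γ γ' => ?_).continuous
    (K := (∫ ω, |G ω x| ∂P).toNNReal)
  rw [Real.dist_eq, Real.dist_eq, Real.coe_toNNReal _ (integral_nonneg fun _ => abs_nonneg _),
    ← integral_mul_const]
  refine abs_integral_sub_integral_le (integrable_max_zero_mul_add_one hG _)
    (integrable_max_zero_mul_add_one hG _) (hG.abs.mul_const _) (ae_of_all _ fun ω => ?_)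
  simpa only [← sub_mul, abs_mul, mul_comm |G ω x|] using
    abs_max_zero_add_one_sub_le (γ * G ω x) (γ' * G ω x)

theorem mul_le_nuObjective {x : E} (hG : Integrable (G · x) P) {ε δ γ : ℝ} (hε : 0 ≤ ε)
    (hγ : 0 ≤ γ) (hmass : ENNReal.ofReal δ ≤ P {ω | ε ≤ G ω x}) :
    (γ * ε + 1) * δ ≤ nuObjective P G x γ := by
  have hδ : δ ≤ P.real {ω | ε ≤ G ω x} :=
    (ENNReal.ofReal_le_iff_le_toReal (measure_ne_top _ _)).1 hmass
  have hsub : {ω | ε ≤ G ω x} ⊆ {ω | γ * ε + 1 ≤ max 0 (γ * G ω x + 1)} :=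
    fun ω (hω : ε ≤ G ω x) =>
      show γ * ε + 1 ≤ max 0 (γ * G ω x + 1) from le_max_of_le_right (by gcongr)
  calc (γ * ε + 1) * δ ≤ (γ * ε + 1) * P.real {ω | γ * ε + 1 ≤ max 0 (γ * G ω x + 1)} := by
        gcongr
        exact hδ.trans (measureReal_mono hsub)
    _ ≤ nuObjective P G x γ :=
        mul_meas_ge_le_integral_of_nonneg (ae_of_all _ fun _ => le_max_left _ _)
          (integrable_max_zero_mul_add_one hG _) _

variable [NormedAddCommGroup E]

theorem abs_nuObjective_sub_le {x x₀ : E} (hx : Integrable (G · x) P)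
    (hx₀ : Integrable (G · x₀) P) {K : Ω → ℝ} (hK : Integrable K P)
    (hlip : ∀ᵐ ω ∂P, |G ω x - G ω x₀| ≤ K ω * ‖x - x₀‖) (γ : ℝ) :
    |nuObjective P G x γ - nuObjective P G x₀ γ| ≤ |γ| * (∫ ω, K ω ∂P) * ‖x - x₀‖ := by
  rw [mul_right_comm, ← integral_const_mul]
  refine abs_integral_sub_integral_le (integrable_max_zero_mul_add_one hx _)
    (integrable_max_zero_mul_add_one hx₀ _) (hK.const_mul _) ?_
  filter_upwards [hlip] with ω hω
  calc _ ≤ |γ| * |G ω x - G ω x₀| := by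
        simpa only [← mul_sub, abs_mul] using
          abs_max_zero_add_one_sub_le (γ * G ω x) (γ * G ω x₀)
    _ ≤ |γ| * (K ω * ‖x - x₀‖) := by gcongr
    _ = _ := by ring

theorem nuObjective_le_add_of_isMinOn {x x₀ : E} (hx : Integrable (G · x) P)
    (hx₀ : Integrable (G · x₀) P) {K : Ω → ℝ} (hK : Integrable K P)
    (hlip : ∀ᵐ ω ∂P, |G ω x - G ω x₀| ≤ K ω * ‖x - x₀‖) {γ γ₀ : ℝ}
    (hγ : IsMinOn (nuObjective P G x) (Ici 0) γ) (hγ₀ : 0 ≤ γ₀) :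
    nuObjective P G x₀ γ ≤
      nuObjective P G x₀ γ₀ + (|γ| + |γ₀|) * (∫ ω, K ω ∂P) * ‖x - x₀‖ := by
  obtain ⟨h, -⟩ := abs_le.1 (abs_nuObjective_sub_le hx hx₀ hK hlip γ)
  obtain ⟨-, h₀⟩ := abs_le.1 (abs_nuObjective_sub_le hx hx₀ hK hlip γ₀)
  have hmin : nuObjective P G x γ ≤ nuObjective P G x γ₀ := hγ hγ₀
  linarith

end NortonUryasev

section Selection

variable {Ω E : Type*} [MeasurableSpace Ω] {P : Measure Ω} [IsProbabilityMeasure P]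
  {G : Ω → E → ℝ}

theorem nuObjective_zero (x : E) : nuObjective P G x 0 = 1 := by
  simp [nuObjective]

theorem exists_mem_Icc_isMinOn_nuObjective {x : E} (hG : Integrable (G · x) P) {ε δ : ℝ}
    (hε : 0 < ε) (hδ : 0 < δ) (hmass : ENNReal.ofReal δ ≤ P {ω | ε ≤ G ω x}) :
    ∃ γ ∈ Icc 0 (δ * ε)⁻¹, IsMinOn (nuObjective P G x) (Ici 0) γ := by
  obtain ⟨γ, hγ, hmin⟩ := isCompact_Icc.exists_isMinOn
    (nonempty_Icc.2 (by positivity : (0 : ℝ) ≤ (δ * ε)⁻¹)) (continuous_nuObjective hG).continuousOn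
  refine ⟨γ, hγ, fun γ' (hγ' : 0 ≤ γ') => ?_⟩
  rcases le_or_gt γ' (δ * ε)⁻¹ with hle | hgt
  · exact hmin ⟨hγ', hle⟩
  · have hlarge : 1 ≤ (γ' * ε + 1) * δ := by
      have := (inv_lt_iff_one_lt_mul₀ (by positivity)).1 hgt
      nlinarith
    calc nuObjective P G x γ ≤ nuObjective P G x 0 := hmin ⟨le_rfl, by positivity⟩
      _ = 1 := nuObjective_zero x
      _ ≤ nuObjective P G x γ' := hlarge.trans (mul_le_nuObjective hG hε.le hγ' hmass)

variable [NormedAddCommGroup E]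

theorem exists_tendsto_isMinOn_nuObjective {X : Set E} {x₀ : E} (hX : X ∈ 𝓝 x₀)
    (hint : ∀ x, Integrable (G · x) P) {K : Ω → ℝ} (hK : Integrable K P)
    (hK0 : ∀ᵐ ω ∂P, 0 ≤ K ω) (hlip : ∀ᵐ ω ∂P, ∀ x ∈ X, |G ω x - G ω x₀| ≤ K ω * ‖x - x₀‖)
    {ε δ : ℝ} (hε : 0 < ε) (hδ : 0 < δ)
    (hmass : ∀ x ∈ X, ENNReal.ofReal δ ≤ P {ω | ε ≤ G ω x})
    {γ₀ : ℝ} (hΓ : nuArgmin P G x₀ = {γ₀}) :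
    ∃ γ : E → ℝ, Tendsto γ (𝓝 x₀) (𝓝 γ₀) ∧
      ∀ x ∈ X, 0 ≤ γ x ∧ IsMinOn (nuObjective P G x) (Ici 0) (γ x) := by
  set M := (δ * ε)⁻¹
  have hsel : ∀ x, ∃ γ, x ∈ X → γ ∈ Icc 0 M ∧ IsMinOn (nuObjective P G x) (Ici 0) γ := by
    intro x
    by_cases hx : x ∈ X
    · obtain ⟨γ, hγ⟩ := exists_mem_Icc_isMinOn_nuObjective (hint x) hε hδ (hmass x hx)
      exact ⟨γ, fun _ => hγ⟩
    · exact ⟨0, fun h => absurd h hx⟩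
  choose γ hγ using hsel
  refine ⟨γ, ?_, fun x hx => ⟨(hγ x hx).1.1, (hγ x hx).2⟩⟩
  obtain ⟨hγ₀0, hγ₀⟩ : γ₀ ∈ nuArgmin P G x₀ := hΓ ▸ rfl
  set C := (M + |γ₀|) * ∫ ω, K ω ∂P
  have hupper : ∀ x ∈ X, nuObjective P G x₀ (γ x) ≤ nuObjective P G x₀ γ₀ + C * ‖x - x₀‖ := by
    intro x hx
    refine (nuObjective_le_add_of_isMinOn (hint x) (hint x₀) hK
      (hlip.mono fun ω hω => hω x hx) (hγ x hx).2 hγ₀0).trans ?_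
    have hγM : |γ x| ≤ M := (abs_of_nonneg (hγ x hx).1.1).trans_le (hγ x hx).1.2
    gcongr
    exact mul_le_mul_of_nonneg_right (by linarith) (integral_nonneg_of_ae hK0)
  have hlim : Tendsto (fun x => nuObjective P G x₀ γ₀ + C * ‖x - x₀‖) (𝓝 x₀)
      (𝓝 (nuObjective P G x₀ γ₀)) := by
    simpa using (((tendsto_id (x := 𝓝 x₀)).sub_const x₀).norm.const_mul C).const_add
      (nuObjective P G x₀ γ₀)
  refine isCompact_Icc.tendsto_of_tendsto_comp (continuous_nuObjective (hint x₀))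
    (fun b hb hbeq => ?_) (eventually_of_mem hX fun x hx => (hγ x hx).1) ?_
  · have hb' : b ∈ nuArgmin P G x₀ := ⟨hb.1, fun γ' hγ' => hbeq ▸ hγ₀ hγ'⟩
    rwa [hΓ] at hb'
  · exact tendsto_of_tendsto_of_tendsto_of_le_of_le' tendsto_const_nhds hlim
      (eventually_of_mem hX fun x hx => hγ₀ (hγ x hx).1.1) (eventually_of_mem hX hupper)

end Selection

section Hinge

variable {E : Type*} [NormedAddCommGroup E] [InnerProductSpace ℝ E]

theorem norm_inv_norm_mul_inner_le (v w : E) : ‖‖w‖⁻¹ * ⟪v, w⟫_ℝ‖ ≤ ‖v‖ := by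
  rw [norm_mul, norm_inv, norm_norm]
  exact inv_mul_le_of_le_mul₀ (norm_nonneg _) (norm_nonneg _)
    ((norm_inner_le_norm v w).trans_eq (mul_comm _ _))

theorem norm_slope_max_zero_mul_add_one_le {f : E → ℝ} {x x₀ v : E} {γ γ₀ k : ℝ} (hk : 0 ≤ k)
    (hf : |f x - f x₀| ≤ k * ‖x - x₀‖) (hv : ‖v‖ ≤ |γ₀| * k) :
    ‖‖x - x₀‖⁻¹ * (max 0 (γ * f x + 1) - max 0 (γ * f x₀ + 1) - ⟪v, x - x₀⟫_ℝ)‖ ≤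
      (|γ| + |γ₀|) * k := by
  have h1 : |max 0 (γ * f x + 1) - max 0 (γ * f x₀ + 1)| ≤ |γ| * (k * ‖x - x₀‖) :=
    calc _ ≤ |γ * f x - γ * f x₀| := abs_max_zero_add_one_sub_le _ _
      _ ≤ _ := by rw [← mul_sub, abs_mul]; gcongr
  have h2 : |⟪v, x - x₀⟫_ℝ| ≤ |γ₀| * k * ‖x - x₀‖ :=
    (abs_real_inner_le_norm _ _).trans (by gcongr)
  rw [Real.norm_eq_abs, abs_mul, abs_inv, abs_norm]
  refine inv_mul_le_of_le_mul₀ (norm_nonneg _) (by positivity) ?_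
  calc _ ≤ |max 0 (γ * f x + 1) - max 0 (γ * f x₀ + 1)| + |⟪v, x - x₀⟫_ℝ| := abs_sub _ _
    _ ≤ ‖x - x₀‖ * ((|γ| + |γ₀|) * k) := by linarith

variable [CompleteSpace E]

theorem hasGradientAt_of_le_sub_le {p l u : E → ℝ} {x₀ v : E}
    (hl : ∀ᶠ x in 𝓝 x₀, l x ≤ p x - p x₀) (hu : ∀ᶠ x in 𝓝 x₀, p x - p x₀ ≤ u x)
    (hl' : Tendsto (fun x => ‖x - x₀‖⁻¹ * (l x - ⟪v, x - x₀⟫_ℝ)) (𝓝 x₀) (𝓝 0))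
    (hu' : Tendsto (fun x => ‖x - x₀‖⁻¹ * (u x - ⟪v, x - x₀⟫_ℝ)) (𝓝 x₀) (𝓝 0)) :
    HasGradientAt p v x₀ := by
  have h := tendsto_of_tendsto_of_tendsto_of_le_of_le' hl' hu'
    (hl.mono fun x hx => mul_le_mul_of_nonneg_left (sub_le_sub_right hx _) (by positivity))
    (hu.mono fun x hx => mul_le_mul_of_nonneg_left (sub_le_sub_right hx _) (by positivity))
  rw [hasGradientAt_iff_tendsto]
  simpa [norm_mul, norm_inv] using h.norm

/-- `F(ξ, x, γ)` of the paper, for `f = g(ξ, ·)`. -/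
noncomputable def hingeGradient (f : E → ℝ) (γ : ℝ) (x : E) : E :=
  if γ * f x + 1 ≤ 0 then 0 else γ • gradient f x

theorem tendsto_slope_max_zero_mul_add_one {f : E → ℝ} {x₀ : E} (hf : DifferentiableAt ℝ f x₀)
    {γ : E → ℝ} {γ₀ : ℝ} (hγ : Tendsto γ (𝓝 x₀) (𝓝 γ₀)) (hc : γ₀ * f x₀ + 1 ≠ 0) :
    Tendsto (fun x => ‖x - x₀‖⁻¹ * (max 0 (γ x * f x + 1) - max 0 (γ x * f x₀ + 1)
      - ⟪hingeGradient f γ₀ x₀, x - x₀⟫_ℝ)) (𝓝 x₀) (𝓝 0) := by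
  have hq : Tendsto (fun x => γ x * f x + 1) (𝓝 x₀) (𝓝 (γ₀ * f x₀ + 1)) :=
    (hγ.mul hf.continuousAt.tendsto).add_const 1
  have hq₀ : Tendsto (fun x => γ x * f x₀ + 1) (𝓝 x₀) (𝓝 (γ₀ * f x₀ + 1)) :=
    (hγ.mul_const _).add_const 1
  rcases hc.lt_or_gt with hneg | hpos
  · refine tendsto_const_nhds.congr' ?_
    filter_upwards [hq.eventually_lt_const hneg, hq₀.eventually_lt_const hneg] with x h1 h2
    simp [hingeGradient, hneg.le, max_eq_left h1.le, max_eq_left h2.le]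
  · have hR : Tendsto (fun x => ‖x - x₀‖⁻¹ * (f x - f x₀ - ⟪gradient f x₀, x - x₀⟫_ℝ))
        (𝓝 x₀) (𝓝 0) := by
      rw [tendsto_zero_iff_norm_tendsto_zero]
      simpa [norm_mul, norm_inv] using hasGradientAt_iff_tendsto.1 hf.hasGradientAt
    have hγ' : Tendsto (fun x => γ x - γ₀) (𝓝 x₀) (𝓝 0) := by
      simpa using hγ.sub_const γ₀
    have hlin := hγ'.zero_mul_isBoundedUnder_le
      (g := fun x => ‖x - x₀‖⁻¹ * ⟪gradient f x₀, x - x₀⟫_ℝ) (isBoundedUnder_of ⟨_, fun x => norm_inv_norm_mul_inner_le _ (x - x₀)⟩)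
    have hsum := (hγ.mul hR).add hlin
    rw [mul_zero, add_zero] at hsum
    refine hsum.congr' ?_
    filter_upwards [hq.eventually_const_lt hpos, hq₀.eventually_const_lt hpos] with x h1 h2
    rw [hingeGradient, if_neg hpos.not_ge, max_eq_right h1.le, max_eq_right h2.le,
      real_inner_smul_left]
    ring

theorem norm_hingeGradient_le (f : E → ℝ) (γ : ℝ) (x : E) :
    ‖hingeGradient f γ x‖ ≤ |γ| * ‖gradient f x‖ := by
  unfold hingeGradient
  split_ifs
  · rw [norm_zero]; positivity
  · rw [norm_smul, Real.norm_eq_abs]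

theorem hingeGradient_eq_smul (f : E → ℝ) (γ : ℝ) (x : E) :
    hingeGradient f γ x = (if γ * f x + 1 ≤ 0 then 0 else γ) • gradient f x := by
  unfold hingeGradient
  split_ifs <;> simp

theorem norm_gradient_le_of_eventually_le {f : E → ℝ} {x₀ : E} (hf : DifferentiableAt ℝ f x₀)
    {C : ℝ} (hC : 0 ≤ C) (h : ∀ᶠ x in 𝓝 x₀, |f x - f x₀| ≤ C * ‖x - x₀‖) :
    ‖gradient f x₀‖ ≤ C := by
  rw [gradient, LinearIsometryEquiv.norm_map]
  exact hf.hasFDerivAt.le_of_lip' hC h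

theorem ae_norm_hingeGradient_le {Ω : Type*} [MeasurableSpace Ω] {P : Measure Ω}
    {G : Ω → E → ℝ} {X : Set E} {x₀ : E} (hX : X ∈ 𝓝 x₀) {K : Ω → ℝ}
    (hK0 : ∀ᵐ ω ∂P, 0 ≤ K ω) (hlip : ∀ᵐ ω ∂P, ∀ x ∈ X, |G ω x - G ω x₀| ≤ K ω * ‖x - x₀‖)
    (hdiff : ∀ᵐ ω ∂P, DifferentiableAt ℝ (G ω) x₀) (γ₀ : ℝ) :
    ∀ᵐ ω ∂P, ‖hingeGradient (G ω) γ₀ x₀‖ ≤ |γ₀| * K ω := by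
  filter_upwards [hK0, hlip, hdiff] with ω h0 hl hd
  exact (norm_hingeGradient_le _ _ _).trans (mul_le_mul_of_nonneg_left
    (norm_gradient_le_of_eventually_le hd h0 (eventually_of_mem hX hl)) (abs_nonneg _))

end Hinge

section RandomGradient

variable {Ω E : Type*} [MeasurableSpace Ω] {P : Measure Ω}
  [NormedAddCommGroup E] [InnerProductSpace ℝ E] [FiniteDimensional ℝ E] {G : Ω → E → ℝ}

theorem aestronglyMeasurable_gradient {x₀ : E} (hG : ∀ x, AEMeasurable (G · x) P)
    (hdiff : ∀ᵐ ω ∂P, DifferentiableAt ℝ (G ω) x₀) :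
    AEStronglyMeasurable (fun ω => gradient (G ω) x₀) P := by
  let b := stdOrthonormalBasis ℝ E
  -- each coordinate of the gradient is an a.e. limit of difference quotients
  have hcoord : ∀ i, AEMeasurable (fun ω => ⟪b i, gradient (G ω) x₀⟫_ℝ) P := by
    intro i
    refine aemeasurable_of_tendsto_metrizable_ae atTop
      (f := fun (k : ℕ) ω => (k : ℝ) * (G ω (x₀ + (k : ℝ)⁻¹ • b i) - G ω x₀))
      (fun k => ((hG _).sub (hG _)).const_mul _) ?_
    filter_upwards [hdiff] with ω hω
    simpa [real_inner_comm] using hω.hasGradientAt.hasFDerivAt.lim (b i)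
      (tendsto_norm_atTop_atTop.comp tendsto_natCast_atTop_atTop)
  have hsum : (fun ω => gradient (G ω) x₀) = fun ω => ∑ i, ⟪b i, gradient (G ω) x₀⟫_ℝ • b i :=
    funext fun ω => (b.sum_repr' _).symm
  rw [hsum]
  exact Finset.aestronglyMeasurable_fun_sum _ fun i _ =>
    (hcoord i).aestronglyMeasurable.smul_const (b i)

theorem integrable_hingeGradient {X : Set E} {x₀ : E} (hX : X ∈ 𝓝 x₀)
    (hG : ∀ x, AEMeasurable (G · x) P) {K : Ω → ℝ} (hK : Integrable K P)
    (hK0 : ∀ᵐ ω ∂P, 0 ≤ K ω) (hlip : ∀ᵐ ω ∂P, ∀ x ∈ X, |G ω x - G ω x₀| ≤ K ω * ‖x - x₀‖)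
    (hdiff : ∀ᵐ ω ∂P, DifferentiableAt ℝ (G ω) x₀) (γ₀ : ℝ) :
    Integrable (fun ω => hingeGradient (G ω) γ₀ x₀) P := by
  refine (hK.const_mul |γ₀|).mono' ?_ (ae_norm_hingeGradient_le hX hK0 hlip hdiff γ₀)
  simp_rw [hingeGradient_eq_smul]
  have hstep : Measurable fun t : ℝ => if t ≤ 0 then (0 : ℝ) else γ₀ :=
    Measurable.ite measurableSet_Iic measurable_const measurable_const
  exact (hstep.comp_aemeasurable (((hG x₀).const_mul γ₀).add_const 1)).aestronglyMeasurable.smul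
    (aestronglyMeasurable_gradient hG hdiff)

theorem tendsto_slope_nuObjective [IsFiniteMeasure P] {X : Set E} {x₀ : E} (hX : X ∈ 𝓝 x₀)
    (hint : ∀ x, Integrable (G · x) P) {K : Ω → ℝ} (hK : Integrable K P)
    (hK0 : ∀ᵐ ω ∂P, 0 ≤ K ω) (hlip : ∀ᵐ ω ∂P, ∀ x ∈ X, |G ω x - G ω x₀| ≤ K ω * ‖x - x₀‖)
    (hdiff : ∀ᵐ ω ∂P, DifferentiableAt ℝ (G ω) x₀) {γ₀ : ℝ}
    (hkink : ∀ᵐ ω ∂P, γ₀ * G ω x₀ + 1 ≠ 0) {γ : E → ℝ} (hγ : Tendsto γ (𝓝 x₀) (𝓝 γ₀)) :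
    Tendsto (fun x => ‖x - x₀‖⁻¹ * (nuObjective P G x (γ x) - nuObjective P G x₀ (γ x)
      - ⟪∫ ω, hingeGradient (G ω) γ₀ x₀ ∂P, x - x₀⟫_ℝ)) (𝓝 x₀) (𝓝 0) := by
  set F := fun ω => hingeGradient (G ω) γ₀ x₀
  have hF : Integrable F P :=
    integrable_hingeGradient hX (fun x => (hint x).aemeasurable) hK hK0 hlip hdiff γ₀
  set ρ := fun x ω => ‖x - x₀‖⁻¹ * (max 0 (γ x * G ω x + 1) - max 0 (γ x * G ω x₀ + 1)
    - ⟪F ω, x - x₀⟫_ℝ)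
  have hdiffInt : ∀ x, Integrable (fun ω => max 0 (γ x * G ω x + 1) - max 0 (γ x * G ω x₀ + 1)) P :=
    fun x => (integrable_max_zero_mul_add_one (hint x) _).sub
      (integrable_max_zero_mul_add_one (hint x₀) _)
  have hρ : ∀ x, ∫ ω, ρ x ω ∂P = ‖x - x₀‖⁻¹ * (nuObjective P G x (γ x)
      - nuObjective P G x₀ (γ x) - ⟪∫ ω, F ω ∂P, x - x₀⟫_ℝ) := by
    intro x
    simp only [ρ, nuObjective]
    rw [integral_const_mul, integral_sub (hdiffInt x) (hF.inner_const _),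
      integral_sub (integrable_max_zero_mul_add_one (hint x) _)
        (integrable_max_zero_mul_add_one (hint x₀) _)]
    simp_rw [real_inner_comm (x - x₀)]
    rw [integral_inner hF]
  have hbound : ∀ᶠ x in 𝓝 x₀, ∀ᵐ ω ∂P, ‖ρ x ω‖ ≤ (2 * |γ₀| + 1) * K ω := by
    filter_upwards [hγ.abs.eventually_lt_const (lt_add_one |γ₀|), hX] with x hγx hx
    filter_upwards [hK0, hlip, ae_norm_hingeGradient_le hX hK0 hlip hdiff γ₀] with ω h0 hl hFω
    exact (norm_slope_max_zero_mul_add_one_le h0 (hl x hx) hFω).trans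
      (mul_le_mul_of_nonneg_right (by linarith) h0)
  have hpoint : ∀ᵐ ω ∂P, Tendsto (ρ · ω) (𝓝 x₀) (𝓝 0) := by
    filter_upwards [hdiff, hkink] with ω hd hω
    exact tendsto_slope_max_zero_mul_add_one hd hγ hω
  have hlim := tendsto_integral_filter_of_dominated_convergence (F := ρ) _
    (Eventually.of_forall fun x => (((hdiffInt x).sub (hF.inner_const _)).const_mul _).1)
    hbound (hK.const_mul _) hpoint
  simpa only [hρ, integral_zero] using hlim

theorem hasGradientAt_bufferedFailureProb [IsProbabilityMeasure P] {X : Set E} {x₀ : E}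
    (hX : X ∈ 𝓝 x₀) (hint : ∀ x, Integrable (G · x) P) {K : Ω → ℝ} (hK : Integrable K P)
    (hK0 : ∀ᵐ ω ∂P, 0 ≤ K ω) (hlip : ∀ᵐ ω ∂P, ∀ x ∈ X, |G ω x - G ω x₀| ≤ K ω * ‖x - x₀‖)
    (hdiff : ∀ᵐ ω ∂P, DifferentiableAt ℝ (G ω) x₀) {ε δ : ℝ} (hε : 0 < ε) (hδ : 0 < δ)
    (hmass : ∀ x ∈ X, ENNReal.ofReal δ ≤ P {ω | ε ≤ G ω x})
    {γ₀ : ℝ} (hΓ : nuArgmin P G x₀ = {γ₀}) (hkink : ∀ᵐ ω ∂P, γ₀ * G ω x₀ + 1 ≠ 0) :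
    HasGradientAt (bufferedFailureProb P G) (∫ ω, hingeGradient (G ω) γ₀ x₀ ∂P) x₀ := by
  obtain ⟨hγ₀0, hγ₀⟩ : γ₀ ∈ nuArgmin P G x₀ := hΓ ▸ rfl
  obtain ⟨γ, hγ, hγmin⟩ :=
    exists_tendsto_isMinOn_nuObjective hX hint hK hK0 hlip hε hδ hmass hΓ
  refine hasGradientAt_of_le_sub_le ?_ ?_
    (tendsto_slope_nuObjective hX hint hK hK0 hlip hdiff hkink hγ)
    (tendsto_slope_nuObjective hX hint hK hK0 hlip hdiff hkink tendsto_const_nhds)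
  · filter_upwards [hX] with x hx
    rw [bufferedFailureProb_eq_of_isMinOn (hγmin x hx).1 (hγmin x hx).2]
    linarith [bufferedFailureProb_le_nuObjective (P := P) (G := G) x₀ (hγmin x hx).1]
  · filter_upwards with x
    rw [bufferedFailureProb_eq_of_isMinOn hγ₀0 hγ₀]
    linarith [bufferedFailureProb_le_nuObjective (P := P) (G := G) x hγ₀0]

end RandomGradient

theorem buffered_failure_probability_gradient_general
    {m n : ℕ} {Ω : Type*} [MeasurableSpace Ω] (P : Measure Ω) [IsProbabilityMeasure P]
    (ξ : Ω → EuclideanSpace ℝ (Fin m)) (hξ : Measurable ξ)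
    (g : EuclideanSpace ℝ (Fin m) → EuclideanSpace ℝ (Fin n) → ℝ)
    (hint : ∀ x : EuclideanSpace ℝ (Fin n), Integrable (fun ω => g (ξ ω) x) P)
    (xhat : EuclideanSpace ℝ (Fin n)) (X : Set (EuclideanSpace ℝ (Fin n)))
    (hX : X ∈ nhds xhat)
    (ha : ∀ x ∈ X, ∃ Ξ : Set (EuclideanSpace ℝ (Fin m)), MeasurableSet Ξ ∧
      P {ω | ξ ω ∈ Ξ} = 1 ∧ ∀ z ∈ Ξ, ContDiffAt ℝ 1 (g z) x)
    (hb : ∃ ε : ℝ, 0 < ε ∧ ∃ δ ∈ Set.Ioc (0 : ℝ) 1, ∀ x ∈ X,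
      ENNReal.ofReal δ ≤ P {ω | ε ≤ g (ξ ω) x})
    (hd : ∃ κ : EuclideanSpace ℝ (Fin m) → ℝ, Measurable κ ∧ (∀ z, 0 ≤ κ z) ∧
      Integrable (fun ω => κ (ξ ω)) P ∧
      ∀ z : EuclideanSpace ℝ (Fin m), ∀ x ∈ X, ∀ x' ∈ X,
        |g z x - g z x'| ≤ κ z * ‖x - x'‖)
    (he : ∀ γ : ℝ, 0 < γ → ∀ x ∈ X, P {ω | γ * g (ξ ω) x = -1} = 0)
    (γhat : ℝ)
    (hf : {γ : ℝ | 0 ≤ γ ∧ ∀ γ' : ℝ, 0 ≤ γ' →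
        (∫ ω, max 0 (γ * g (ξ ω) xhat + 1) ∂P) ≤
          ∫ ω, max 0 (γ' * g (ξ ω) xhat + 1) ∂P} = {γhat}) :
    HasGradientAt
      (fun x => ⨅ γ : Set.Ici (0 : ℝ), ∫ ω, max 0 ((γ : ℝ) * g (ξ ω) x + 1) ∂P)
      (∫ ω, (if γhat * g (ξ ω) xhat + 1 ≤ 0 then 0
        else γhat • gradient (g (ξ ω)) xhat) ∂P) xhat := by
  set G : Ω → EuclideanSpace ℝ (Fin n) → ℝ := fun ω x => g (ξ ω) x
  obtain ⟨ε, hε, δ, hδ, hmass⟩ := hb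
  obtain ⟨κ, -, hκ0, hκ, hlip⟩ := hd
  have hxhat : xhat ∈ X := mem_of_mem_nhds hX
  have hdiff : ∀ᵐ ω ∂P, DifferentiableAt ℝ (G ω) xhat := by
    obtain ⟨Ξ, hΞ, hPΞ, hC1⟩ := ha xhat hxhat
    have hξΞ : ∀ᵐ ω ∂P, ξ ω ∈ Ξ :=
      (ae_iff_measure_eq (hξ hΞ).nullMeasurableSet).2 (by rw [measure_univ]; exact hPΞ)
    exact hξΞ.mono fun ω hω => (hC1 _ hω).differentiableAt one_ne_zero
  have hΓ : nuArgmin P G xhat = {γhat} := hf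
  have hkink : ∀ᵐ ω ∂P, γhat * G ω xhat + 1 ≠ 0 := by
    rcases (hΓ ▸ rfl : γhat ∈ nuArgmin P G xhat).1.eq_or_lt with h0 | hpos
    · exact ae_of_all _ fun ω => by simp [← h0]
    · exact (measure_eq_zero_iff_ae_notMem.1 (he γhat hpos xhat hxhat)).mono
        fun ω hω h => hω (eq_neg_of_add_eq_zero_left h)
  exact hasGradientAt_bufferedFailureProb hX hint hκ (ae_of_all _ fun ω => hκ0 _)
    (ae_of_all _ fun ω x hx => hlip _ x hx xhat hxhat) hdiff hε hδ.1 hmass hΓ hkink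

/-- (Theorem 2.) Under assumptions (a)–(f) on a neighborhood `X`
of `xhat` — a.s. continuous differentiability of `g(ξ,·)`, a uniform positive
mass on `{g(ξ,x) ≥ ε}`, an integrable bound `h`, an integrable Lipschitz
modulus `κ`, `prob{γ g(ξ,x) = −1} = 0` for `γ > 0`, and uniqueness of the
minimizer `γhat` in the Norton–Uryasev formula at `xhat` — the buffered
failure probability `p̄(x) = inf_{γ ≥ 0} E[max(0, γ g(ξ,x) + 1)]` is
differentiable at `xhat` with gradient `E[F(ξ, xhat, γhat)]`, where
`F(ξ, xhat, γhat) = 0` if `γhat g(ξ,xhat) + 1 ≤ 0` and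
`F(ξ, xhat, γhat) = γhat ∇ₓg(ξ,xhat)` otherwise. -/
theorem buffered_failure_probability_gradient
    {m n : ℕ} {Ω : Type*} [MeasurableSpace Ω] (P : Measure Ω) [IsProbabilityMeasure P]
    (ξ : Ω → EuclideanSpace ℝ (Fin m)) (hξ : Measurable ξ)
    (g : EuclideanSpace ℝ (Fin m) → EuclideanSpace ℝ (Fin n) → ℝ)
    (hint : ∀ x : EuclideanSpace ℝ (Fin n), Integrable (fun ω => g (ξ ω) x) P)
    (xhat : EuclideanSpace ℝ (Fin n)) (X : Set (EuclideanSpace ℝ (Fin n)))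
    (hX : X ∈ nhds xhat)
    (ha : ∀ x ∈ X, ∃ Ξ : Set (EuclideanSpace ℝ (Fin m)), MeasurableSet Ξ ∧
      P {ω | ξ ω ∈ Ξ} = 1 ∧ ∀ z ∈ Ξ, ContDiffAt ℝ 1 (g z) x)
    (hb : ∃ ε : ℝ, 0 < ε ∧ ∃ δ ∈ Set.Ioc (0 : ℝ) 1, ∀ x ∈ X,
      ENNReal.ofReal δ ≤ P {ω | ε ≤ g (ξ ω) x})
    (hc : ∃ h : EuclideanSpace ℝ (Fin m) → ℝ, Measurable h ∧ (∀ z, 0 ≤ h z) ∧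
      Integrable (fun ω => h (ξ ω)) P ∧
      ∀ z : EuclideanSpace ℝ (Fin m), ∀ x ∈ X, |g z x| ≤ h z)
    (hd : ∃ κ : EuclideanSpace ℝ (Fin m) → ℝ, Measurable κ ∧ (∀ z, 0 ≤ κ z) ∧
      Integrable (fun ω => κ (ξ ω)) P ∧
      ∀ z : EuclideanSpace ℝ (Fin m), ∀ x ∈ X, ∀ x' ∈ X,
        |g z x - g z x'| ≤ κ z * ‖x - x'‖)
    (he : ∀ γ : ℝ, 0 < γ → ∀ x ∈ X, P {ω | γ * g (ξ ω) x = -1} = 0)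
    (γhat : ℝ)
    (hf : {γ : ℝ | 0 ≤ γ ∧ ∀ γ' : ℝ, 0 ≤ γ' →
        (∫ ω, max 0 (γ * g (ξ ω) xhat + 1) ∂P) ≤
          ∫ ω, max 0 (γ' * g (ξ ω) xhat + 1) ∂P} = {γhat}) :
    HasGradientAt
      (fun x => ⨅ γ : Set.Ici (0 : ℝ), ∫ ω, max 0 ((γ : ℝ) * g (ξ ω) x + 1) ∂P)
      (∫ ω, (if γhat * g (ξ ω) xhat + 1 ≤ 0 then 0
        else γhat • gradient (g (ξ ω)) xhat) ∂P) xhat :=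
  buffered_failure_probability_gradient_general P ξ hξ g hint xhat X hX ha hb hd he γhat hf
end

section
/- Let Z be an integrable real-valued random variable and suppose there are ε > 0 and δ ∈ (0,1] with prob{Z ≥ ε} ≥ δ. Then for every γ ≥ 0 one has E[max(0, γZ + 1)] ≥ δ(γε + 1). Consequently, the infimum of γ ↦ E[max(0, γZ + 1)] over γ ∈ [0,∞) is attained, and every minimizer γ satisfies γ ≤ (1 − δ)/(εδ); that is, the minimizer set is nonempty and contained in the interval [0, (1 − δ)/(εδ)]. -/
open MeasureTheory

section Aux

variable {Ω : Type*} [MeasurableSpace Ω]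

lemma buf_aux_int (P : Measure Ω) [IsProbabilityMeasure P] {Z : Ω → ℝ}
    (hZ : Integrable Z P) (γ : ℝ) :
    Integrable (fun ω => max 0 (γ * Z ω + 1)) P := by
  have h : Integrable (fun ω => γ * Z ω + 1) P := (hZ.const_mul γ).add (integrable_const 1)
  simpa [max_comm] using h.pos_part

lemma buf_aux_lb (P : Measure Ω) [IsProbabilityMeasure P] {Z : Ω → ℝ}
    (hZ : Integrable Z P) {ε δ : ℝ} (hε : 0 < ε) (hδ0 : 0 < δ)
    (hprob : ENNReal.ofReal δ ≤ P {ω | ε ≤ Z ω}) {γ : ℝ} (hγ : 0 ≤ γ) :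
    δ * (γ * ε + 1) ≤ ∫ ω, max 0 (γ * Z ω + 1) ∂P := by
  set Z' : Ω → ℝ := hZ.1.mk Z with hZ'def
  have hm : StronglyMeasurable Z' := hZ.1.stronglyMeasurable_mk
  have hae : Z =ᵐ[P] Z' := hZ.1.ae_eq_mk
  have hZ'int : Integrable Z' P := hZ.congr hae
  set s : Set Ω := {ω | ε ≤ Z' ω} with hsdef
  have hs : MeasurableSet s := measurableSet_le measurable_const hm.measurable
  have hseq : ({ω | ε ≤ Z ω} : Set Ω) =ᵐ[P] s := by
    filter_upwards [hae] with ω h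
    show ((ε ≤ Z ω) = (ε ≤ Z' ω))
    rw [h]
  have hPs : ENNReal.ofReal δ ≤ P s := by
    rw [← measure_congr hseq]; exact hprob
  have hPsr : δ ≤ (P s).toReal :=
    (ENNReal.ofReal_le_iff_le_toReal (measure_ne_top P s)).mp hPs
  have hint_eq : (∫ ω, max 0 (γ * Z ω + 1) ∂P) = ∫ ω, max 0 (γ * Z' ω + 1) ∂P := by
    refine integral_congr_ae ?_
    filter_upwards [hae] with ω h
    rw [h]
  have hc : (0:ℝ) ≤ γ * ε + 1 := by positivity
  have hmono : (∫ ω, s.indicator (fun _ => γ * ε + 1) ω ∂P)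
      ≤ ∫ ω, max 0 (γ * Z' ω + 1) ∂P := by
    refine integral_mono ((integrable_const _).indicator hs) (buf_aux_int P hZ'int γ) ?_
    intro ω
    by_cases hω : ω ∈ s
    · rw [Set.indicator_of_mem hω]
      refine le_max_of_le_right ?_
      have : ε ≤ Z' ω := hω
      nlinarith
    · rw [Set.indicator_of_notMem hω]
      exact le_max_left _ _
  have hind : (∫ ω, s.indicator (fun _ => γ * ε + 1) ω ∂P) = (P s).toReal * (γ * ε + 1) := by
    rw [integral_indicator_const _ hs]; simp [smul_eq_mul, Measure.real]
  have h1 : δ * (γ * ε + 1) ≤ (P s).toReal * (γ * ε + 1) :=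
    mul_le_mul_of_nonneg_right hPsr hc
  rw [hint_eq]
  calc δ * (γ * ε + 1) ≤ (P s).toReal * (γ * ε + 1) := h1
    _ = ∫ ω, s.indicator (fun _ => γ * ε + 1) ω ∂P := hind.symm
    _ ≤ _ := hmono

lemma buf_aux_lip (P : Measure Ω) [IsProbabilityMeasure P] {Z : Ω → ℝ}
    (hZ : Integrable Z P) (a b : ℝ) :
    |(∫ ω, max 0 (a * Z ω + 1) ∂P) - ∫ ω, max 0 (b * Z ω + 1) ∂P|
      ≤ |a - b| * ∫ ω, |Z ω| ∂P := by
  rw [← integral_sub (buf_aux_int P hZ a) (buf_aux_int P hZ b)]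
  have h1 : |∫ ω, (max 0 (a * Z ω + 1) - max 0 (b * Z ω + 1)) ∂P|
      ≤ ∫ ω, |max 0 (a * Z ω + 1) - max 0 (b * Z ω + 1)| ∂P :=
    by simpa [Real.norm_eq_abs] using
      norm_integral_le_integral_norm (fun ω => max 0 (a * Z ω + 1) - max 0 (b * Z ω + 1)) (μ := P)
  refine h1.trans ?_
  have h2 : (∫ ω, |max 0 (a * Z ω + 1) - max 0 (b * Z ω + 1)| ∂P)
      ≤ ∫ ω, |a - b| * |Z ω| ∂P := by
    refine integral_mono ((buf_aux_int P hZ a).sub (buf_aux_int P hZ b)).abs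
      (hZ.abs.const_mul _) ?_
    intro ω
    have h3 : |max 0 (a * Z ω + 1) - max 0 (b * Z ω + 1)| ≤ |(a * Z ω + 1) - (b * Z ω + 1)| := by
      rw [max_comm 0 (a * Z ω + 1), max_comm 0 (b * Z ω + 1)]
      exact abs_max_sub_max_le_abs _ _ _
    refine h3.trans ?_
    have : (a * Z ω + 1) - (b * Z ω + 1) = (a - b) * Z ω := by ring
    rw [this, abs_mul]
  refine h2.trans ?_
  rw [integral_const_mul]

end Aux

/-- For an integrable real random variable `Z` with
`prob{Z ≥ ε} ≥ δ` for some `ε > 0` and `δ ∈ (0,1]`, the inner Norton–Uryasev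
objective `γ ↦ E[max(0, γZ + 1)]` satisfies `E[max(0, γZ + 1)] ≥ δ(γε + 1)` for
every `γ ≥ 0`; its infimum over `γ ∈ [0,∞)` is attained; and every minimizer
lies in `[0, (1 − δ)/(εδ)]`. -/
theorem buffered_inner_objective_coercive_and_attained
    {Ω : Type*} [MeasurableSpace Ω] (P : Measure Ω) [IsProbabilityMeasure P]
    (Z : Ω → ℝ) (hZ : Integrable Z P)
    (ε δ : ℝ) (hε : 0 < ε) (hδ : δ ∈ Set.Ioc (0 : ℝ) 1)
    (hprob : ENNReal.ofReal δ ≤ P {ω | ε ≤ Z ω}) :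
    (∀ γ : ℝ, 0 ≤ γ → δ * (γ * ε + 1) ≤ ∫ ω, max 0 (γ * Z ω + 1) ∂P) ∧
    (∃ γ₀ : ℝ, 0 ≤ γ₀ ∧ ∀ γ : ℝ, 0 ≤ γ →
      (∫ ω, max 0 (γ₀ * Z ω + 1) ∂P) ≤ ∫ ω, max 0 (γ * Z ω + 1) ∂P) ∧
    (∀ γ₀ : ℝ, 0 ≤ γ₀ →
      (∀ γ : ℝ, 0 ≤ γ →
        (∫ ω, max 0 (γ₀ * Z ω + 1) ∂P) ≤ ∫ ω, max 0 (γ * Z ω + 1) ∂P) →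
      γ₀ ≤ (1 - δ) / (ε * δ)) := by
  obtain ⟨hδ0, hδ1⟩ := hδ
  set f : ℝ → ℝ := fun γ => ∫ ω, max 0 (γ * Z ω + 1) ∂P with hf
  have hlb : ∀ γ : ℝ, 0 ≤ γ → δ * (γ * ε + 1) ≤ f γ :=
    fun γ hγ => buf_aux_lb P hZ hε hδ0 hprob hγ
  have hf0 : f 0 = 1 := by
    simp [hf]
  set B : ℝ := (1 - δ) / (ε * δ) with hB
  have hεδ : 0 < ε * δ := mul_pos hε hδ0
  have hB0 : 0 ≤ B := div_nonneg (by linarith) hεδ.le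
  have hbig : ∀ γ : ℝ, B < γ → 1 < δ * (γ * ε + 1) := by
    intro γ hγ
    have h1 : 1 - δ < γ * (ε * δ) := (div_lt_iff₀ hεδ).mp hγ
    nlinarith
  -- Lipschitz continuity of f
  have hK0 : (0:ℝ) ≤ ∫ ω, |Z ω| ∂P := integral_nonneg fun ω => abs_nonneg _
  have hL : LipschitzWith (Real.toNNReal (∫ ω, |Z ω| ∂P)) f := by
    refine LipschitzWith.of_dist_le_mul fun a b => ?_
    rw [Real.dist_eq, Real.dist_eq, Real.coe_toNNReal _ hK0]
    calc |f a - f b| ≤ |a - b| * ∫ ω, |Z ω| ∂P := buf_aux_lip P hZ a b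
      _ = (∫ ω, |Z ω| ∂P) * |a - b| := mul_comm _ _
  have hcont : Continuous f := hL.continuous
  obtain ⟨γ₀, hγ₀mem, hγ₀min⟩ :=
    (isCompact_Icc (a := (0:ℝ)) (b := B)).exists_isMinOn
      (Set.nonempty_Icc.mpr hB0) hcont.continuousOn
  refine ⟨hlb, ⟨γ₀, hγ₀mem.1, ?_⟩, ?_⟩
  · intro γ hγ
    rcases le_or_gt γ B with h | h
    · exact hγ₀min ⟨hγ, h⟩
    · have h1 : f γ₀ ≤ f 0 := hγ₀min ⟨le_refl 0, hB0⟩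
      have h2 : 1 < δ * (γ * ε + 1) := hbig γ h
      have h4 := hlb γ (le_trans hB0 h.le)
      calc f γ₀ ≤ f 0 := h1
        _ = 1 := hf0
        _ ≤ δ * (γ * ε + 1) := h2.le
        _ ≤ f γ := h4
  · intro γ₁ hγ₁0 hγ₁min
    by_contra hcon
    push_neg at hcon
    have h1 : f γ₁ ≤ f 0 := hγ₁min 0 le_rfl
    have h2 : 1 < δ * (γ₁ * ε + 1) := hbig γ₁ hcon
    have h3 : δ * (γ₁ * ε + 1) ≤ f γ₁ := hlb γ₁ hγ₁0
    rw [hf0] at h1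
    linarith
end

section
/- Let Z be an integrable real-valued random variable with E[Z] < 0. Then there exists γ > 0 such that E[max(0, γZ + 1)] < 1. Since E[max(0, 0·Z + 1)] = 1, it follows that 0 is not a minimizer of γ ↦ E[max(0, γZ + 1)] over [0,∞); i.e., every minimizer is strictly positive. -/
open MeasureTheory Filter

/-- For an integrable real random variable `Z` with `E[Z] < 0`,
there exists `γ > 0` with `E[max(0, γZ + 1)] < 1`; since the value at `γ = 0`
equals `1`, every minimizer of `γ ↦ E[max(0, γZ + 1)]` over `[0,∞)` is
strictly positive. -/
theorem buffered_inner_objective_minimizer_pos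
    {Ω : Type*} [MeasurableSpace Ω] (P : Measure Ω) [IsProbabilityMeasure P]
    (Z : Ω → ℝ) (hZ : Integrable Z P) (hmean : (∫ ω, Z ω ∂P) < 0) :
    (∃ γ : ℝ, 0 < γ ∧ (∫ ω, max 0 (γ * Z ω + 1) ∂P) < 1) ∧
    (∫ ω, max 0 ((0 : ℝ) * Z ω + 1) ∂P) = 1 ∧
    (∀ γ₀ : ℝ, 0 ≤ γ₀ →
      (∀ γ : ℝ, 0 ≤ γ →
        (∫ ω, max 0 (γ₀ * Z ω + 1) ∂P) ≤ ∫ ω, max 0 (γ * Z ω + 1) ∂P) →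
      0 < γ₀) := by
  have hint : ∀ n : ℕ, Integrable (fun ω => max 0 (-Z ω - n)) P := fun n =>
    (integrable_const (0:ℝ)).sup (hZ.neg.sub (integrable_const (n:ℝ)))
  -- dominated convergence: tail expectations go to 0
  have htend : Tendsto (fun n : ℕ => ∫ ω, max 0 (-Z ω - n) ∂P) atTop (nhds 0) := by
    have := MeasureTheory.tendsto_integral_of_dominated_convergence
      (F := fun n : ℕ => fun ω => max 0 (-Z ω - n)) (f := fun _ => (0:ℝ))
      (bound := fun ω => |Z ω|)
      (fun n => (hint n).aestronglyMeasurable)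
      hZ.abs
      (fun n => Filter.Eventually.of_forall (fun ω => by
        show ‖max 0 (-Z ω - n)‖ ≤ |Z ω|
        rw [Real.norm_eq_abs, abs_of_nonneg (le_max_left _ _)]
        rcases le_or_gt (-Z ω - n) 0 with h | h
        · simp [max_eq_left h, abs_nonneg]
        · rw [max_eq_right h.le]
          have hn : (0:ℝ) ≤ n := Nat.cast_nonneg n
          cases abs_cases (Z ω) <;> linarith))
      (Filter.Eventually.of_forall (fun ω => by
        apply Tendsto.congr' _ tendsto_const_nhds
        filter_upwards [Filter.eventually_ge_atTop (Nat.ceil (-Z ω))] with n hn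
        have h1 : -Z ω - n ≤ 0 := by
          have := le_trans (Nat.le_ceil (-Z ω)) (Nat.cast_le.mpr hn)
          linarith
        simp [max_eq_left h1]))
    simpa using this
  -- choose n with tail expectation < -E[Z]
  obtain ⟨n, hn1, hn2⟩ : ∃ n : ℕ, 1 ≤ n ∧ (∫ ω, max 0 (-Z ω - n) ∂P) < -∫ ω, Z ω ∂P := by
    have hpos : (0:ℝ) < -∫ ω, Z ω ∂P := by linarith
    obtain ⟨n, h1, h2⟩ :=
      ((htend.eventually (eventually_lt_nhds hpos)).and (eventually_ge_atTop 1)).exists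
    exact ⟨n, h2, h1⟩
  have hnpos : (0:ℝ) < n := by exact_mod_cast hn1
  set γ : ℝ := 1 / n with hγdef
  have hγpos : 0 < γ := by positivity
  have hγn : γ * (n:ℝ) = 1 := one_div_mul_cancel hnpos.ne'
  -- value at γ
  have hpt : ∀ ω, max 0 (γ * Z ω + 1) = (γ * Z ω + 1) + γ * max 0 (-Z ω - n) := by
    intro ω
    have he : γ * (-Z ω - n) = -(γ * Z ω + 1) := by linear_combination -hγn
    rw [mul_max_of_nonneg _ _ hγpos.le, mul_zero, he]
    rcases le_total (γ * Z ω + 1) 0 with h | h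
    · rw [max_eq_left h, max_eq_right (by linarith : (0:ℝ) ≤ -(γ * Z ω + 1))]; ring
    · rw [max_eq_right h, max_eq_left (by linarith : -(γ * Z ω + 1) ≤ 0)]; ring
  have hval : (∫ ω, max 0 (γ * Z ω + 1) ∂P)
      = γ * (∫ ω, Z ω ∂P) + 1 + γ * ∫ ω, max 0 (-Z ω - n) ∂P := by
    simp_rw [hpt]
    have hi1 : Integrable (fun ω => γ * Z ω + 1) P := by
      exact (hZ.const_mul γ).add (integrable_const 1)
    have hi2 : Integrable (fun ω => γ * max 0 (-Z ω - n)) P := (hint n).const_mul γ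
    rw [integral_add hi1 hi2, integral_add (hZ.const_mul γ) (integrable_const 1),
      integral_const_mul, integral_const_mul, integral_const]
    simp
  have hlt : (∫ ω, max 0 (γ * Z ω + 1) ∂P) < 1 := by
    rw [hval]
    nlinarith [mul_pos hγpos (by linarith : (0:ℝ) < -(∫ ω, Z ω ∂P) - ∫ ω, max 0 (-Z ω - n) ∂P)]
  have hzero : (∫ ω, max 0 ((0 : ℝ) * Z ω + 1) ∂P) = 1 := by
    simp [integral_const]
  refine ⟨⟨γ, hγpos, hlt⟩, hzero, fun γ₀ h0 hmin => ?_⟩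
  rcases h0.lt_or_eq with h | h
  · exact h
  · exfalso
    have := hmin γ hγpos.le
    rw [← h, hzero] at this
    linarith
end

section
/- Let ξ be an ℝ^m-valued random vector, g : ℝ^m × ℝ^n → ℝ, and X an open subset of ℝ^n. Suppose: (i) for each x ∈ X there is a measurable set Ξ ⊂ ℝ^m with prob{ξ ∈ Ξ} = 1 such that g(ξ,·) is continuously differentiable at x for every ξ ∈ Ξ; (ii) there is a measurable κ : ℝ^m → [0,∞) with E[κ(ξ)] < ∞ and |g(ξ,x) − g(ξ,x′)| ≤ κ(ξ)·‖x − x′‖₂ for all x, x′ ∈ X and ξ ∈ ℝ^m; and (iii) for every γ > 0 and x ∈ X, prob{γ·g(ξ,x) = −1} = 0. Then the map (x,γ) ↦ E[γ·∇ₓg(ξ,x)·𝟙{γ·g(ξ,x) + 1 > 0}] is continuous relative to X × [0,∞), and its value at every (x,0) equals 0. -/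
open MeasureTheory Filter Topology InnerProductSpace

lemma aux_quot {E : Type*} [NormedAddCommGroup E] [NormedSpace ℝ E]
    {f : E → ℝ} {x : E} (v : E) (h : DifferentiableAt ℝ f x) :
    Tendsto (fun k : ℕ => ((k : ℝ) + 1) * (f (x + ((k : ℝ) + 1)⁻¹ • v) - f x)) atTop
      (𝓝 (fderiv ℝ f x v)) := by
  have h2 : HasDerivAt (fun t : ℝ => x + t • v) v 0 := by
    simpa using ((hasDerivAt_id (0:ℝ)).smul_const v).const_add x
  have hf : HasFDerivAt f (fderiv ℝ f x) (x + (0:ℝ) • v) := by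
    simpa using h.hasFDerivAt
  have hd : HasDerivAt (fun t : ℝ => f (x + t • v)) (fderiv ℝ f x v) 0 := by
    exact hf.comp_hasDerivAt (x := (0:ℝ)) h2
  rw [hasDerivAt_iff_tendsto_slope] at hd
  have hseq : Tendsto (fun k : ℕ => ((k : ℝ) + 1)⁻¹) atTop (𝓝[≠] (0:ℝ)) := by
    apply tendsto_nhdsWithin_of_tendsto_nhds_of_eventually_within
    · simpa only [one_div] using tendsto_one_div_add_atTop_nhds_zero_nat (𝕜 := ℝ)
    · refine Eventually.of_forall fun k => ?_
      simp only [Set.mem_compl_iff, Set.mem_singleton_iff]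
      positivity
  have := hd.comp hseq
  refine this.congr fun k => ?_
  have hk : ((k:ℝ)+1)⁻¹ ≠ 0 := by positivity
  simp only [Function.comp_apply, slope_def_field, zero_smul, add_zero, sub_zero, div_eq_mul_inv,
    inv_inv]
  ring

lemma grad_expand {n : ℕ} (f : EuclideanSpace ℝ (Fin n) → ℝ) (x : EuclideanSpace ℝ (Fin n)) :
    gradient f x = ∑ i : Fin n,
      (fderiv ℝ f x (EuclideanSpace.basisFun (Fin n) ℝ i)) •
        EuclideanSpace.basisFun (Fin n) ℝ i := by
  have h : ∀ v, fderiv ℝ f x v = ⟪gradient f x, v⟫_ℝ := fun v => by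
    rw [gradient, toDual_symm_apply]
  conv_lhs => rw [← (EuclideanSpace.basisFun (Fin n) ℝ).sum_repr' (gradient f x)]
  refine Finset.sum_congr rfl fun i _ => ?_
  rw [h, real_inner_comm]

lemma norm_gradient_le {n : ℕ} {f : EuclideanSpace ℝ (Fin n) → ℝ} {x : EuclideanSpace ℝ (Fin n)}
    {X : Set (EuclideanSpace ℝ (Fin n))} (hX : IsOpen X) (hx : x ∈ X) {K : ℝ} (hK : 0 ≤ K)
    (hlip : ∀ a ∈ X, ∀ b ∈ X, |f a - f b| ≤ K * ‖a - b‖) :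
    ‖gradient f x‖ ≤ K := by
  have h1 : LipschitzOnWith ⟨K, hK⟩ f X := by
    apply LipschitzOnWith.of_dist_le_mul
    intro a ha b hb
    rw [Real.dist_eq, dist_eq_norm]
    exact hlip a ha b hb
  have h2 : ‖fderiv ℝ f x‖ ≤ K := by
    exact norm_fderiv_le_of_lipschitzOn ℝ (hX.mem_nhds hx) h1
  calc ‖gradient f x‖ = ‖fderiv ℝ f x‖ := by
        rw [gradient]; exact (LinearIsometryEquiv.norm_map _ _)
    _ ≤ K := h2

lemma contAt_fderiv {E F : Type*} [NormedAddCommGroup E] [NormedSpace ℝ E]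
    [NormedAddCommGroup F] [NormedSpace ℝ F] {f : E → F} {x : E} (h : ContDiffAt ℝ 1 f x) :
    ContinuousAt (fun y => fderiv ℝ f y) x := by
  have h' : ContDiffAt ℝ ((0:ℕ) + 1 : ℕ) f x := by exact_mod_cast h
  obtain ⟨f', ⟨u, hu, hf'⟩, hcont⟩ := contDiffAt_succ_iff_hasFDerivAt.mp h'
  have heq : (fun y => fderiv ℝ f y) =ᶠ[𝓝 x] f' := by
    filter_upwards [hu] with y hy using (hf' y hy).fderiv
  exact ContinuousAt.congr (by exact_mod_cast hcont.continuousAt) heq.symm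

lemma grad_meas {m n : ℕ} {Ω : Type*} [MeasurableSpace Ω] (P : Measure Ω)
    (ξ : Ω → EuclideanSpace ℝ (Fin m))
    (g : EuclideanSpace ℝ (Fin m) → EuclideanSpace ℝ (Fin n) → ℝ)
    (hint : ∀ x : EuclideanSpace ℝ (Fin n), AEStronglyMeasurable (fun ω => g (ξ ω) x) P)
    {x : EuclideanSpace ℝ (Fin n)} {Ξ : Set (EuclideanSpace ℝ (Fin m))}
    (hΞ : ∀ᵐ ω ∂P, ξ ω ∈ Ξ) (hdiff : ∀ z ∈ Ξ, DifferentiableAt ℝ (g z) x) :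
    AEStronglyMeasurable (fun ω => gradient (g (ξ ω)) x) P := by
  set b := EuclideanSpace.basisFun (Fin n) ℝ with hb
  set F : ℕ → Ω → EuclideanSpace ℝ (Fin n) := fun k ω =>
    ∑ i : Fin n, (((k : ℝ) + 1) * (g (ξ ω) (x + ((k : ℝ) + 1)⁻¹ • b i) - g (ξ ω) x)) • b i
    with hF
  refine aestronglyMeasurable_of_tendsto_ae atTop (f := F) (fun k => ?_) ?_
  · refine Finset.aestronglyMeasurable_fun_sum _ fun i _ => ?_
    exact (((hint _).sub (hint x)).const_mul _).smul_const _
  · filter_upwards [hΞ] with ω hω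
    rw [grad_expand]
    exact tendsto_finset_sum _ fun i _ => (aux_quot (b i) (hdiff _ hω)).smul_const _

/-- On an open set `X`, under a.s. continuous differentiability of
`g(ξ,·)` at each `x ∈ X`, an integrable Lipschitz modulus `κ` on `X`, and
`prob{γ g(ξ,x) = −1} = 0` for all `γ > 0`, `x ∈ X`, the partial gradient map
`(x,γ) ↦ E[γ ∇ₓg(ξ,x) 𝟙{γ g(ξ,x) + 1 > 0}]` is continuous relative to
`X × [0,∞)`, and its value at every `(x,0)`, `x ∈ X`, equals `0`. -/
theorem inner_objective_gradient_continuous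
    {m n : ℕ} {Ω : Type*} [MeasurableSpace Ω] (P : Measure Ω) [IsProbabilityMeasure P]
    (ξ : Ω → EuclideanSpace ℝ (Fin m)) (hξ : Measurable ξ)
    (g : EuclideanSpace ℝ (Fin m) → EuclideanSpace ℝ (Fin n) → ℝ)
    (hint : ∀ x : EuclideanSpace ℝ (Fin n), Integrable (fun ω => g (ξ ω) x) P)
    (X : Set (EuclideanSpace ℝ (Fin n))) (hX : IsOpen X)
    (hi : ∀ x ∈ X, ∃ Ξ : Set (EuclideanSpace ℝ (Fin m)), MeasurableSet Ξ ∧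
      P {ω | ξ ω ∈ Ξ} = 1 ∧ ∀ z ∈ Ξ, ContDiffAt ℝ 1 (g z) x)
    (hii : ∃ κ : EuclideanSpace ℝ (Fin m) → ℝ, Measurable κ ∧ (∀ z, 0 ≤ κ z) ∧
      Integrable (fun ω => κ (ξ ω)) P ∧
      ∀ z : EuclideanSpace ℝ (Fin m), ∀ x ∈ X, ∀ x' ∈ X,
        |g z x - g z x'| ≤ κ z * ‖x - x'‖)
    (hiii : ∀ γ : ℝ, 0 < γ → ∀ x ∈ X, P {ω | γ * g (ξ ω) x = -1} = 0)
    (G : EuclideanSpace ℝ (Fin n) × ℝ → EuclideanSpace ℝ (Fin n))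
    (hG : G = fun q => ∫ ω, (if 0 < q.2 * g (ξ ω) q.1 + 1
      then q.2 • gradient (g (ξ ω)) q.1 else 0) ∂P) :
    ContinuousOn G (X ×ˢ Set.Ici (0 : ℝ)) ∧ ∀ x ∈ X, G (x, 0) = 0 := by
  subst hG
  obtain ⟨κ, hκm, hκ0, hκint, hκlip⟩ := hii
  have hgb : ∀ z, ∀ x ∈ X, ‖gradient (g z) x‖ ≤ κ z := fun z x hx =>
    norm_gradient_le hX hx (hκ0 z) (fun a ha b hb => hκlip z a ha b hb)
  constructor
  · -- continuity
    rintro ⟨x₀, γ₀⟩ hq₀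
    obtain ⟨hx₀, hγ₀⟩ := hq₀
    simp only [Set.mem_Ici] at hγ₀
    -- a.e. measurable gradients
    have hfull : ∀ (Ξ : Set (EuclideanSpace ℝ (Fin m))), MeasurableSet Ξ →
        P {ω | ξ ω ∈ Ξ} = 1 → ∀ᵐ ω ∂P, ξ ω ∈ Ξ := by
      intro Ξ hm h1
      rw [ae_iff]
      have hms : MeasurableSet {ω | ξ ω ∈ Ξ} := hξ hm
      have := measure_compl hms (measure_ne_top P _)
      exact this.trans (by simp [h1])
    have hmeas : ∀ x ∈ X, AEStronglyMeasurable (fun ω => gradient (g (ξ ω)) x) P := by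
      intro x hx
      obtain ⟨Ξ, hm, h1, hd⟩ := hi x hx
      exact grad_meas P ξ g (fun x => (hint x).aestronglyMeasurable) (hfull Ξ hm h1)
        (fun z hz => (hd z hz).differentiableAt one_ne_zero)
    have hFmeas : ∀ x ∈ X, ∀ γ : ℝ, AEStronglyMeasurable
        (fun ω => if 0 < γ * g (ξ ω) x + 1 then γ • gradient (g (ξ ω)) x else 0) P := by
      intro x hx γ
      obtain ⟨h', h'm, hh'⟩ := (hint x).aestronglyMeasurable
      obtain ⟨G', G'm, hG'⟩ := (hmeas x hx).const_smul γ
      refine ⟨fun ω => if 0 < γ * h' ω + 1 then G' ω else 0, ?_, ?_⟩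
      · exact StronglyMeasurable.ite
          (measurableSet_lt measurable_const ((h'm.measurable.const_mul γ).add_const 1))
          G'm stronglyMeasurable_const
      · filter_upwards [hh', hG'] with ω e1 e2
        simp only [e1, ← e2, Pi.smul_apply]
    -- pointwise bound helper
    have hbnd : ∀ ω : Ω, ∀ q : EuclideanSpace ℝ (Fin n) × ℝ, q.1 ∈ X → 0 ≤ q.2 →
        ‖if 0 < q.2 * g (ξ ω) q.1 + 1 then q.2 • gradient (g (ξ ω)) q.1 else 0‖
          ≤ q.2 * κ (ξ ω) := by
      intro ω q hq1 hq2
      by_cases hc : 0 < q.2 * g (ξ ω) q.1 + 1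
      · rw [if_pos hc, norm_smul, Real.norm_eq_abs, abs_of_nonneg hq2]
        exact mul_le_mul_of_nonneg_left (hgb (ξ ω) q.1 hq1) hq2
      · rw [if_neg hc]
        simp only [norm_zero]
        exact mul_nonneg hq2 (hκ0 _)
    apply continuousWithinAt_of_dominated (bound := fun ω => (γ₀ + 1) * κ (ξ ω))
    · filter_upwards [self_mem_nhdsWithin] with q hq
      exact hFmeas q.1 hq.1 q.2
    · have hev : ∀ᶠ q in 𝓝[X ×ˢ Set.Ici (0:ℝ)] (x₀, γ₀),
          q ∈ X ×ˢ Set.Ici (0:ℝ) ∧ q.2 < γ₀ + 1 := by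
        refine Filter.Eventually.and eventually_mem_nhdsWithin (eventually_nhdsWithin_of_eventually_nhds ?_)
        exact (isOpen_lt continuous_snd continuous_const).eventually_mem
          (show ((x₀, γ₀) : _ × ℝ).2 < γ₀ + 1 by simp)
      filter_upwards [hev] with q hq
      refine ae_of_all _ fun ω => ?_
      calc _ ≤ q.2 * κ (ξ ω) := hbnd ω q hq.1.1 hq.1.2
        _ ≤ (γ₀ + 1) * κ (ξ ω) := mul_le_mul_of_nonneg_right hq.2.le (hκ0 _)
    · exact hκint.const_mul _
    · -- a.e. continuity of the integrand in q
      rcases eq_or_lt_of_le hγ₀ with h0' | hpos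
      · -- γ₀ = 0
        obtain rfl : γ₀ = 0 := h0'.symm
        refine ae_of_all _ fun ω => ?_
        have hT : Tendsto (fun q : EuclideanSpace ℝ (Fin n) × ℝ =>
            if 0 < q.2 * g (ξ ω) q.1 + 1 then q.2 • gradient (g (ξ ω)) q.1 else 0)
            (𝓝[X ×ˢ Set.Ici (0:ℝ)] (x₀, 0)) (𝓝 0) := by
          refine squeeze_zero_norm' (a := fun q : EuclideanSpace ℝ (Fin n) × ℝ => q.2 * κ (ξ ω)) ?_ ?_
          · filter_upwards [self_mem_nhdsWithin] with q hq
            exact hbnd ω q hq.1 hq.2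
          · have : Tendsto (fun q : EuclideanSpace ℝ (Fin n) × ℝ => q.2)
                (𝓝[X ×ˢ Set.Ici (0:ℝ)] (x₀, 0)) (𝓝 (0:ℝ)) :=
              (continuous_snd.tendsto _).mono_left nhdsWithin_le_nhds
            simpa using this.mul_const (κ (ξ ω))
        unfold ContinuousWithinAt
        convert hT using 2
        norm_num
        · rfl
        · simp
      · -- γ₀ > 0
        obtain ⟨Ξ₀, hΞ₀m, hΞ₀1, hΞ₀d⟩ := hi x₀ hx₀
        have hae2 : ∀ᵐ ω ∂P, γ₀ * g (ξ ω) x₀ ≠ -1 := by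
          rw [ae_iff]
          push_neg
          simpa using hiii γ₀ hpos x₀ hx₀
        filter_upwards [hfull Ξ₀ hΞ₀m hΞ₀1, hae2] with ω h1 h2
        set z := ξ ω with hz
        have hca : ContinuousAt (g z) x₀ := (hΞ₀d z h1).continuousAt
        have hT : ContinuousAt (fun q : EuclideanSpace ℝ (Fin n) × ℝ =>
            q.2 * g z q.1 + 1) (x₀, γ₀) :=
          (continuousAt_snd.mul (hca.comp continuousAt_fst)).add continuousAt_const
        have hT0 : γ₀ * g z x₀ + 1 ≠ 0 := fun h => h2 (by linarith)
        have hgradc : ContinuousAt (fun y => gradient (g z) y) x₀ := by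
          have : (fun y => gradient (g z) y)
              = fun y => (toDual ℝ (EuclideanSpace ℝ (Fin n))).symm (fderiv ℝ (g z) y) := rfl
          rw [this]
          exact ((toDual ℝ (EuclideanSpace ℝ (Fin n))).symm.continuous.continuousAt).comp
            (contAt_fderiv (hΞ₀d z h1))
        rcases hT0.lt_or_gt with hneg | hposT
        · have hev : ∀ᶠ q in 𝓝[X ×ˢ Set.Ici (0:ℝ)] ((x₀, γ₀) : _ × ℝ),
              q.2 * g z q.1 + 1 < 0 :=
            (hT.eventually (eventually_lt_nhds hneg)).filter_mono nhdsWithin_le_nhds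
          refine ContinuousWithinAt.congr_of_eventuallyEq
            (continuousWithinAt_const (b := (0 : EuclideanSpace ℝ (Fin n)))) ?_ ?_
          · filter_upwards [hev] with q hq
            rw [if_neg (by linarith)]
          · rw [if_neg (not_lt.2 hneg.le)]
        · have hev : ∀ᶠ q in 𝓝[X ×ˢ Set.Ici (0:ℝ)] ((x₀, γ₀) : _ × ℝ),
              0 < q.2 * g z q.1 + 1 :=
            (hT.eventually (eventually_gt_nhds hposT)).filter_mono nhdsWithin_le_nhds
          have hcont2 : ContinuousWithinAt (fun q : EuclideanSpace ℝ (Fin n) × ℝ =>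
              q.2 • gradient (g z) q.1) (X ×ˢ Set.Ici (0:ℝ)) (x₀, γ₀) :=
            (ContinuousAt.smul (f := fun q : EuclideanSpace ℝ (Fin n) × ℝ => q.2)
              (g := fun q : EuclideanSpace ℝ (Fin n) × ℝ => gradient (g z) q.1)
              continuousAt_snd (ContinuousAt.comp (g := fun y => gradient (g z) y) (f := Prod.fst)
                (x := ((x₀, γ₀) : EuclideanSpace ℝ (Fin n) × ℝ)) hgradc continuousAt_fst)).continuousWithinAt
          refine hcont2.congr_of_eventuallyEq ?_ ?_
          · filter_upwards [hev] with q hq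
            rw [if_pos hq]
          · rw [if_pos hposT]
  · intro x hx
    norm_num
end

section
/- Let x > 1. Then the infimum over γ ∈ [0,∞) of the function e(γ) = (1/2)·∫_{−1}^{1} max(0, γ(xξ − 1) + 1) dξ equals 1 − 1/x, and γ = 1/(x − 1) is its unique minimizer. -/
lemma lin_int (c d a b : ℝ) :
    ∫ ξ in a..b, (c * ξ + d) = c * (b ^ 2 - a ^ 2) / 2 + d * (b - a) := by
  have h1 : IntervalIntegrable (fun ξ : ℝ => c * ξ) MeasureTheory.volume a b :=
    (continuous_const.mul continuous_id).intervalIntegrable a b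
  have h2 : IntervalIntegrable (fun _ : ℝ => d) MeasureTheory.volume a b :=
    intervalIntegrable_const
  rw [intervalIntegral.integral_add h1 h2, intervalIntegral.integral_const_mul,
    integral_id, intervalIntegral.integral_const, smul_eq_mul]
  ring

lemma caseA (x γ : ℝ) (hx : 1 < x) (hγ : 0 ≤ γ) (h : γ * (1 + x) ≤ 1) :
    (∫ ξ in (-1 : ℝ)..1, max 0 (γ * (x * ξ - 1) + 1)) = 2 * (1 - γ) := by
  have : (∫ ξ in (-1 : ℝ)..1, max 0 (γ * (x * ξ - 1) + 1))
      = ∫ ξ in (-1 : ℝ)..1, (γ * x * ξ + (1 - γ)) := by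
    apply intervalIntegral.integral_congr
    intro ξ hξ
    rw [Set.uIcc_of_le (by norm_num)] at hξ
    obtain ⟨h1, h2⟩ := hξ
    have : 0 ≤ γ * (x * ξ - 1) + 1 := by
      nlinarith [mul_nonneg hγ (show 0 ≤ x * (ξ + 1) by nlinarith)]
    dsimp only
    rw [sup_eq_right.mpr this]; ring
  rw [this, lin_int]; ring

lemma caseB (x γ : ℝ) (hx : 1 < x) (h : 1 ≤ γ * (1 + x)) :
    (∫ ξ in (-1 : ℝ)..1, max 0 (γ * (x * ξ - 1) + 1))
      = (γ * (x - 1) + 1) ^ 2 / (2 * x * γ) := by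
  have hγ : 0 < γ := by nlinarith
  have hx0 : 0 < x := by linarith
  have hγx : 0 < γ * x := by positivity
  set t : ℝ := (γ - 1) / (γ * x) with ht
  have ht1 : -1 ≤ t := by
    rw [ht, le_div_iff₀ hγx]; nlinarith
  have ht2 : t ≤ 1 := by
    rw [ht, div_le_iff₀ hγx]; nlinarith
  have hcont : Continuous (fun ξ : ℝ => max 0 (γ * (x * ξ - 1) + 1)) := by
    fun_prop
  have hsplit := intervalIntegral.integral_add_adjacent_intervals
    (hcont.intervalIntegrable (μ := MeasureTheory.volume) (-1) t)
    (hcont.intervalIntegrable (μ := MeasureTheory.volume) t 1)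
  have hkey : γ * x * t = γ - 1 := by rw [ht]; field_simp
  have hleft : (∫ ξ in (-1 : ℝ)..t, max 0 (γ * (x * ξ - 1) + 1)) = 0 := by
    have : (∫ ξ in (-1 : ℝ)..t, max 0 (γ * (x * ξ - 1) + 1))
        = ∫ ξ in (-1 : ℝ)..t, (0 : ℝ) := by
      apply intervalIntegral.integral_congr
      intro ξ hξ
      rw [Set.uIcc_of_le ht1] at hξ
      have : γ * (x * ξ - 1) + 1 ≤ 0 := by nlinarith [hξ.2]
      dsimp only
      rw [sup_eq_left.mpr this]
    rw [this, intervalIntegral.integral_const, smul_zero]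
  have hright : (∫ ξ in t..(1 : ℝ), max 0 (γ * (x * ξ - 1) + 1))
      = ∫ ξ in t..(1 : ℝ), (γ * x * ξ + (1 - γ)) := by
    apply intervalIntegral.integral_congr
    intro ξ hξ
    rw [Set.uIcc_of_le ht2] at hξ
    have : 0 ≤ γ * (x * ξ - 1) + 1 := by nlinarith [hξ.1]
    dsimp only
    rw [sup_eq_right.mpr this]; ring
  rw [← hsplit, hleft, hright, lin_int, zero_add, ht]
  field_simp
  ring

/-- For `x > 1` and `ξ` uniform on `[−1,1]` with `g(ξ,x) = xξ − 1`,
the Norton–Uryasev inner objective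
`e(γ) = (1/2)·∫_{−1}^{1} max(0, γ(xξ − 1) + 1) dξ` has infimum `1 − 1/x` over
`γ ∈ [0,∞)`, attained uniquely at `γ = 1/(x − 1)`. -/
theorem uniform_buffered_probability_minimizer
    (x : ℝ) (hx : 1 < x)
    (e : ℝ → ℝ)
    (he : e = fun γ => (1 / 2) * ∫ ξ in (-1 : ℝ)..1, max 0 (γ * (x * ξ - 1) + 1)) :
    e (1 / (x - 1)) = 1 - 1 / x ∧
    ∀ γ : ℝ, 0 ≤ γ → γ ≠ 1 / (x - 1) → 1 - 1 / x < e γ := by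
  have hx0 : 0 < x := by linarith
  have hx1 : (0:ℝ) < x - 1 := by linarith
  subst he
  constructor
  · have h : 1 ≤ (1 / (x - 1)) * (1 + x) := by
      rw [div_mul_eq_mul_div, le_div_iff₀ hx1]; linarith
    simp only [caseB x _ hx h]
    field_simp
    ring
  · intro γ hγ hne
    by_cases h : γ * (1 + x) ≤ 1
    · simp only [caseA x γ hx hγ h]
      have : γ < 1 / x := by
        rw [lt_div_iff₀ hx0]; nlinarith
      have h1x : 0 < 1 / x := by positivity
      nlinarith
    · push_neg at h
      simp only [caseB x γ hx h.le]
      have hγ0 : 0 < γ := by nlinarith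
      have hne' : γ * (x - 1) - 1 ≠ 0 := by
        intro hc
        apply hne
        field_simp
        linarith
      have h2 : 0 < (γ * (x - 1) - 1) ^ 2 := by positivity
      have h1x : (1:ℝ) - 1 / x = (x - 1) / x := by field_simp
      rw [show (1:ℝ) / 2 * ((γ * (x - 1) + 1) ^ 2 / (2 * x * γ))
          = (γ * (x - 1) + 1) ^ 2 / (4 * x * γ) by ring]
      rw [h1x, div_lt_div_iff₀ hx0 (by positivity)]
      nlinarith [mul_pos hx0 h2]
end

section
/- Let ρ ∈ (0, 1/2) and set σ = 1 − (1−ρ)⁴ − (1−ρ)³ρ, τ = 1 − (1−ρ)⁴ − 2(1−ρ)³ρ, and x̂ = (1 − (1−ρ)⁴)/(2(1−ρ)³ρ). For x > 0 define B(x) = inf_{γ ≥ 0} [ (1−ρ)⁴·max(0, γ(1 − 2x) + 1) + 2(1−ρ)³ρ·max(0, γ(1 − x) + 1) + τ·max(0, γ + 1) ]. Then B(x) = 2σx/(2x − 1) whenever 1/(2(1−ρ)⁴) < x ≤ x̂, and B(x) = τx/(x − 1) whenever x > x̂. -/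
lemma inf_eq_of_lb (F : Set.Ici (0:ℝ) → ℝ) (γ0 : Set.Ici (0:ℝ)) (v : ℝ)
    (h0 : F γ0 = v) (hlb : ∀ γ, v ≤ F γ) : (⨅ γ, F γ) = v :=
  le_antisymm (h0 ▸ ciInf_le ⟨v, by rintro _ ⟨γ, rfl⟩; exact hlb γ⟩ γ0) (le_ciInf hlb)

lemma inf_regime1 (a b t x : ℝ) (ha : 0 < a) (hb : 0 < b) (ht : 0 < t)
    (hsum : a + b + t = 1) (hx1 : 1 < 2 * a * x) (hx2 : b * x ≤ b + t) :
    (⨅ γ : Set.Ici (0:ℝ),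
      (a * max 0 ((γ : ℝ) * (1 - 2 * x) + 1) + b * max 0 ((γ : ℝ) * (1 - x) + 1) +
        t * max 0 ((γ : ℝ) + 1))) = (b + 2 * t) * x / (2 * x - 1) := by
  have ha1 : a < 1 := by nlinarith
  have hx : 1 < 2 * x := by nlinarith
  have h2x : 0 < 2 * x - 1 := by linarith
  have hxpos : 0 < x := by nlinarith
  apply inf_eq_of_lb _ ⟨1 / (2 * x - 1), Set.mem_Ici.2 (by positivity)⟩
  · have e1 : (1 / (2 * x - 1)) * (1 - 2 * x) + 1 = 0 := by field_simp; ring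
    have e2 : (1 / (2 * x - 1)) * (1 - x) + 1 = x / (2 * x - 1) := by
      field_simp; ring
    have e3 : (1 / (2 * x - 1) : ℝ) + 1 = 2 * x / (2 * x - 1) := by
      field_simp; ring
    simp only [e1, e2, e3, max_self]
    rw [max_eq_right (by positivity), max_eq_right (by positivity)]
    field_simp; ring
  · rintro ⟨γ, hγ⟩
    simp only [Set.mem_Ici] at hγ
    dsimp only
    have hm1 : γ * (1 - 2 * x) + 1 ≤ max 0 (γ * (1 - 2 * x) + 1) := le_max_right _ _
    have hm1' : (0:ℝ) ≤ max 0 (γ * (1 - 2 * x) + 1) := le_max_left _ _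
    have hm2 : γ * (1 - x) + 1 ≤ max 0 (γ * (1 - x) + 1) := le_max_right _ _
    have hm2' : (0:ℝ) ≤ max 0 (γ * (1 - x) + 1) := le_max_left _ _
    have hm3 : γ + 1 ≤ max 0 (γ + 1) := le_max_right _ _
    rw [div_le_iff₀ h2x]
    rcases le_total (γ * (2 * x - 1)) 1 with hc | hc
    · nlinarith [mul_nonneg ha.le (sub_nonneg.2 hm1), mul_nonneg hb.le (sub_nonneg.2 hm2),
        mul_nonneg ht.le (sub_nonneg.2 hm3),
        mul_nonneg (sub_nonneg.2 hc) (by nlinarith : (0:ℝ) ≤ 2 * a * x + b * x - 1)]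
    · nlinarith [mul_nonneg ha.le hm1', mul_nonneg hb.le (sub_nonneg.2 hm2),
        mul_nonneg ht.le (sub_nonneg.2 hm3),
        mul_nonneg (sub_nonneg.2 hc) (by linarith : (0:ℝ) ≤ b + t - b * x)]

lemma inf_regime2 (a b t x : ℝ) (ha : 0 < a) (hb : 0 < b) (ht : 0 < t)
    (hsum : a + b + t = 1) (hx2 : b + t < b * x) :
    (⨅ γ : Set.Ici (0:ℝ),
      (a * max 0 ((γ : ℝ) * (1 - 2 * x) + 1) + b * max 0 ((γ : ℝ) * (1 - x) + 1) +
        t * max 0 ((γ : ℝ) + 1))) = t * x / (x - 1) := by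
  have hx : 1 < x := by nlinarith
  have h1x : 0 < x - 1 := by linarith
  apply inf_eq_of_lb _ ⟨1 / (x - 1), Set.mem_Ici.2 (by positivity)⟩
  · have e1 : (1 / (x - 1)) * (1 - 2 * x) + 1 = -x / (x - 1) := by
      field_simp; ring
    have e2 : (1 / (x - 1)) * (1 - x) + 1 = 0 := by field_simp; ring
    have e3 : (1 / (x - 1) : ℝ) + 1 = x / (x - 1) := by field_simp; ring
    simp only [e1, e2, e3, max_self]
    rw [max_eq_left (by rw [neg_div]; simp; positivity), max_eq_right (by positivity)]
    ring
  · rintro ⟨γ, hγ⟩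
    simp only [Set.mem_Ici] at hγ
    dsimp only
    have hm1' : (0:ℝ) ≤ max 0 (γ * (1 - 2 * x) + 1) := le_max_left _ _
    have hm2 : γ * (1 - x) + 1 ≤ max 0 (γ * (1 - x) + 1) := le_max_right _ _
    have hm2' : (0:ℝ) ≤ max 0 (γ * (1 - x) + 1) := le_max_left _ _
    have hm3 : γ + 1 ≤ max 0 (γ + 1) := le_max_right _ _
    rw [div_le_iff₀ h1x]
    rcases le_total (γ * (x - 1)) 1 with hc | hc
    · nlinarith [mul_nonneg ha.le hm1', mul_nonneg hb.le (sub_nonneg.2 hm2),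
        mul_nonneg ht.le (sub_nonneg.2 hm3),
        mul_nonneg (sub_nonneg.2 hc) (by linarith : (0:ℝ) ≤ b * x - b - t)]
    · nlinarith [mul_nonneg ha.le hm1', mul_nonneg hb.le hm2',
        mul_nonneg ht.le (sub_nonneg.2 hm3),
        mul_nonneg (sub_nonneg.2 hc) ht.le]

/-- For the four-component network example with component failure
probability `ρ ∈ (0, 1/2)`, `σ = 1 − (1−ρ)⁴ − (1−ρ)³ρ`,
`τ = 1 − (1−ρ)⁴ − 2(1−ρ)³ρ` and `xhat = (1 − (1−ρ)⁴)/(2(1−ρ)³ρ)`, the buffered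
failure probability
`B(x) = inf_{γ ≥ 0} [(1−ρ)⁴·max(0, γ(1−2x)+1) + 2(1−ρ)³ρ·max(0, γ(1−x)+1) + τ·max(0, γ+1)]`
satisfies `B(x) = 2σx/(2x − 1)` for `1/(2(1−ρ)⁴) < x ≤ xhat` and
`B(x) = τx/(x − 1)` for `x > xhat`. -/
theorem network_buffered_failure_probability_formula
    (ρ σ τ xhat : ℝ) (hρ : ρ ∈ Set.Ioo (0 : ℝ) (1 / 2))
    (hσ : σ = 1 - (1 - ρ) ^ 4 - (1 - ρ) ^ 3 * ρ)
    (hτ : τ = 1 - (1 - ρ) ^ 4 - 2 * (1 - ρ) ^ 3 * ρ)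
    (hxhat : xhat = (1 - (1 - ρ) ^ 4) / (2 * (1 - ρ) ^ 3 * ρ))
    (B : ℝ → ℝ)
    (hB : B = fun x => ⨅ γ : Set.Ici (0 : ℝ),
      ((1 - ρ) ^ 4 * max 0 ((γ : ℝ) * (1 - 2 * x) + 1) +
        2 * (1 - ρ) ^ 3 * ρ * max 0 ((γ : ℝ) * (1 - x) + 1) +
        τ * max 0 ((γ : ℝ) + 1))) :
    (∀ x : ℝ, 1 / (2 * (1 - ρ) ^ 4) < x → x ≤ xhat → B x = 2 * σ * x / (2 * x - 1)) ∧
    (∀ x : ℝ, xhat < x → B x = τ * x / (x - 1)) := by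
  obtain ⟨hρ0, hρ1⟩ := hρ
  have hρ' : 0 < 1 - ρ := by linarith
  have ha : 0 < (1 - ρ) ^ 4 := by positivity
  have hb : 0 < 2 * (1 - ρ) ^ 3 * ρ := by positivity
  have ht : 0 < τ := by rw [hτ]; nlinarith [pow_pos hρ' 3, sq_nonneg ρ, sq_nonneg (1 - ρ)]
  have hsum : (1 - ρ) ^ 4 + 2 * (1 - ρ) ^ 3 * ρ + τ = 1 := by rw [hτ]; ring
  have hone : 1 - (1 - ρ) ^ 4 = 2 * (1 - ρ) ^ 3 * ρ + τ := by rw [hτ]; ring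
  constructor
  · intro x hx1 hx2
    rw [div_lt_iff₀ (by positivity)] at hx1
    rw [hxhat, le_div_iff₀ hb] at hx2
    have hx1' : 1 < 2 * (1 - ρ) ^ 4 * x := by nlinarith
    have hx2' : 2 * (1 - ρ) ^ 3 * ρ * x ≤ 2 * (1 - ρ) ^ 3 * ρ + τ := by nlinarith
    rw [hB]; dsimp only
    rw [inf_regime1 _ _ _ x ha hb ht hsum hx1' hx2', hσ, hτ]
    ring
  · intro x hx
    rw [hxhat, div_lt_iff₀ hb] at hx
    have hx' : 2 * (1 - ρ) ^ 3 * ρ + τ < 2 * (1 - ρ) ^ 3 * ρ * x := by nlinarith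
    rw [hB]; dsimp only
    rw [inf_regime2 _ _ _ x ha hb ht hsum hx']
end

section
/- Let ρ ∈ (0, 1/2), τ = 1 − (1−ρ)⁴ − 2(1−ρ)³ρ, and x̂ = (1 − (1−ρ)⁴)/(2(1−ρ)³ρ). Then the set of minimizers Γ(x̂) = argmin_{γ ≥ 0} [ (1−ρ)⁴·max(0, γ(1 − 2x̂) + 1) + 2(1−ρ)³ρ·max(0, γ(1 − x̂) + 1) + τ·max(0, γ + 1) ] equals the closed interval [1/(2x̂ − 1), 1/(x̂ − 1)]. -/
/-- For the four-component network example with component failure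
probability `ρ ∈ (0, 1/2)`, `τ = 1 − (1−ρ)⁴ − 2(1−ρ)³ρ` and
`xhat = (1 − (1−ρ)⁴)/(2(1−ρ)³ρ)`, the minimizer set
`Γ(xhat) = argmin_{γ ≥ 0} [(1−ρ)⁴·max(0, γ(1−2xhat)+1) + 2(1−ρ)³ρ·max(0, γ(1−xhat)+1) + τ·max(0, γ+1)]`
equals the closed interval `[1/(2xhat − 1), 1/(xhat − 1)]`. -/
theorem network_buffered_failure_probability_minimizer_set
    (ρ τ xhat : ℝ) (hρ : ρ ∈ Set.Ioo (0 : ℝ) (1 / 2))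
    (hτ : τ = 1 - (1 - ρ) ^ 4 - 2 * (1 - ρ) ^ 3 * ρ)
    (hxhat : xhat = (1 - (1 - ρ) ^ 4) / (2 * (1 - ρ) ^ 3 * ρ))
    (e : ℝ → ℝ)
    (he : e = fun γ =>
      (1 - ρ) ^ 4 * max 0 (γ * (1 - 2 * xhat) + 1) +
        2 * (1 - ρ) ^ 3 * ρ * max 0 (γ * (1 - xhat) + 1) +
        τ * max 0 (γ + 1)) :
    {γ : ℝ | 0 ≤ γ ∧ ∀ γ' : ℝ, 0 ≤ γ' → e γ ≤ e γ'} =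
      Set.Icc (1 / (2 * xhat - 1)) (1 / (xhat - 1)) := by
  obtain ⟨hρ0, hρ2⟩ := hρ
  have hp0 : (0:ℝ) < 1 - ρ := by linarith
  have hD : (0:ℝ) < 2 * (1 - ρ) ^ 3 * ρ := by positivity
  have hτ0 : 0 < τ := by
    rw [hτ]
    nlinarith [mul_pos hρ0 hρ0, pow_pos hρ0 3, sq_nonneg ρ, sq_nonneg (1 - ρ)]
  have hxD : xhat * (2 * (1 - ρ) ^ 3 * ρ) = 1 - (1 - ρ) ^ 4 := by
    rw [hxhat]; field_simp
  have hτD : τ = (xhat - 1) * (2 * (1 - ρ) ^ 3 * ρ) := by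
    rw [hτ]; linear_combination -hxD
  have hx1 : 1 < xhat := by nlinarith [hτ0, hτD, hD]
  have hb0 : 0 < xhat - 1 := by linarith
  have ha0 : 0 < 2 * xhat - 1 := by linarith
  have haPos : 0 < 1 / (2 * xhat - 1) := by positivity
  have hbPos : 0 < 1 / (xhat - 1) := by positivity
  -- key linear identity valid for all γ
  have key : ∀ γ : ℝ,
      2 * (1 - ρ) ^ 3 * ρ * (γ * (1 - xhat) + 1) + τ * (γ + 1) = 1 - (1 - ρ) ^ 4 := by
    intro γ
    linear_combination (γ + 1) * hτD + hxD
  -- global lower bound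
  have hlow : ∀ γ : ℝ, 1 - (1 - ρ) ^ 4 ≤ e γ := by
    intro γ
    simp only [he]
    have h1 : (0:ℝ) ≤ max 0 (γ * (1 - 2 * xhat) + 1) := le_max_left _ _
    have h2 : γ * (1 - xhat) + 1 ≤ max 0 (γ * (1 - xhat) + 1) := le_max_right _ _
    have h3 : γ + 1 ≤ max 0 (γ + 1) := le_max_right _ _
    have hm2 := mul_le_mul_of_nonneg_left h2 hD.le
    have hm3 := mul_le_mul_of_nonneg_left h3 hτ0.le
    have hm1 := mul_nonneg (pow_nonneg hp0.le 4) h1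
    linarith [key γ]
  -- value on the interval
  have hval : ∀ γ : ℝ, 1 / (2 * xhat - 1) ≤ γ → γ ≤ 1 / (xhat - 1) →
      e γ = 1 - (1 - ρ) ^ 4 := by
    intro γ hga hgb
    have hga' : 1 ≤ γ * (2 * xhat - 1) := (div_le_iff₀ ha0).mp hga
    have hgb' : γ * (xhat - 1) ≤ 1 := (le_div_iff₀ hb0).mp hgb
    have m1 : γ * (1 - 2 * xhat) + 1 ≤ 0 := by nlinarith
    have m2 : 0 ≤ γ * (1 - xhat) + 1 := by nlinarith
    have m3 : 0 ≤ γ + 1 := by linarith [le_trans haPos.le hga]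
    simp only [he]
    rw [max_eq_left m1, max_eq_right m2, max_eq_right m3]
    linear_combination key γ
  ext γ
  simp only [Set.mem_setOf_eq, Set.mem_Icc]
  constructor
  · rintro ⟨hγ0, hmin⟩
    have hab : 1 / (2 * xhat - 1) ≤ 1 / (xhat - 1) :=
      one_div_le_one_div_of_le hb0 (by linarith)
    have hmval : e γ = 1 - (1 - ρ) ^ 4 := by
      have h1 := hmin (1 / (2 * xhat - 1)) haPos.le
      rw [hval (1 / (2 * xhat - 1)) le_rfl hab] at h1
      exact le_antisymm h1 (hlow γ)
    constructor
    · by_contra h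
      push_neg at h
      have h1 : γ * (2 * xhat - 1) < 1 := (lt_div_iff₀ ha0).mp h
      have m1 : 0 < γ * (1 - 2 * xhat) + 1 := by nlinarith
      have m2 : 0 ≤ γ * (1 - xhat) + 1 := by nlinarith [mul_nonneg hγ0 hb0.le]
      have m3 : 0 ≤ γ + 1 := by linarith
      have heq : e γ = (1 - ρ) ^ 4 * (γ * (1 - 2 * xhat) + 1) +
          2 * (1 - ρ) ^ 3 * ρ * (γ * (1 - xhat) + 1) + τ * (γ + 1) := by
        simp only [he]
        rw [max_eq_right m1.le, max_eq_right m2, max_eq_right m3]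
      have hp4 : (0:ℝ) < (1 - ρ) ^ 4 := pow_pos hp0 4
      nlinarith [key γ, mul_pos hp4 m1, hmval, heq]
    · by_contra h
      push_neg at h
      have hγpos : 0 < γ := lt_trans hbPos h
      have h1 : 1 < γ * (xhat - 1) := (div_lt_iff₀ hb0).mp h
      have m2 : γ * (1 - xhat) + 1 < 0 := by nlinarith
      have m1 : γ * (1 - 2 * xhat) + 1 < 0 := by
        nlinarith [mul_pos hγpos (by linarith : (0:ℝ) < xhat)]
      have m3 : 0 ≤ γ + 1 := by linarith
      have heq : e γ = τ * (γ + 1) := by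
        simp only [he]
        rw [max_eq_left m1.le, max_eq_left m2.le, max_eq_right m3]
        ring
      have hfin : τ * (γ + 1) - (1 - (1 - ρ) ^ 4) =
          2 * (1 - ρ) ^ 3 * ρ * (γ * (xhat - 1) - 1) := by
        linear_combination (γ + 1) * hτD + hxD
      have hpos : 0 < 2 * (1 - ρ) ^ 3 * ρ * (γ * (xhat - 1) - 1) :=
        mul_pos hD (by linarith)
      rw [heq] at hmval
      linarith
  · rintro ⟨hga, hgb⟩
    refine ⟨le_trans haPos.le hga, fun γ' _ => ?_⟩
    rw [hval γ hga hgb]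
    exact hlow γ'
end

section
/- Let ρ ∈ (0, 1/2) and set σ = 1 − (1−ρ)⁴ − (1−ρ)³ρ, τ = 1 − (1−ρ)⁴ − 2(1−ρ)³ρ, and x̂ = (1 − (1−ρ)⁴)/(2(1−ρ)³ρ). Define B(x) = inf_{γ ≥ 0} [ (1−ρ)⁴·max(0, γ(1 − 2x) + 1) + 2(1−ρ)³ρ·max(0, γ(1 − x) + 1) + τ·max(0, γ + 1) ] for x > 0. Then B has a left derivative at x̂ equal to −2σ/(2x̂ − 1)² and a right derivative at x̂ equal to −τ/(x̂ − 1)²; these two values are distinct, so B is not differentiable at x̂. -/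
open Set Filter

lemma inf_left_formula (p q t x : ℝ) (hp : 0 < p) (hq : 0 < q) (ht : 0 ≤ t)
    (hx1 : 1 < x) (hs1 : p * (1 - 2*x) + q * (1 - x) + t ≤ 0)
    (hs2 : 0 ≤ q * (1 - x) + t) :
    (⨅ γ : Set.Ici (0:ℝ),
      (p * max 0 ((γ : ℝ) * (1 - 2 * x) + 1) + q * max 0 ((γ : ℝ) * (1 - x) + 1) +
        t * max 0 ((γ : ℝ) + 1))) = (q + 2*t) * x / (2*x - 1) := by
  haveI : Nonempty (Set.Ici (0:ℝ)) := ⟨⟨0, Set.self_mem_Ici⟩⟩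
  have hd : (0:ℝ) < 2*x - 1 := by linarith
  have hbdd : BddBelow (Set.range fun γ : Set.Ici (0:ℝ) =>
      (p * max 0 ((γ : ℝ) * (1 - 2 * x) + 1) + q * max 0 ((γ : ℝ) * (1 - x) + 1) +
        t * max 0 ((γ : ℝ) + 1))) := by
    refine ⟨0, ?_⟩
    rintro y ⟨γ, rfl⟩
    have h1 : (0:ℝ) ≤ max 0 ((γ : ℝ) * (1 - 2 * x) + 1) := le_max_left _ _
    have h2 : (0:ℝ) ≤ max 0 ((γ : ℝ) * (1 - x) + 1) := le_max_left _ _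
    have h3 : (0:ℝ) ≤ max 0 ((γ : ℝ) + 1) := le_max_left _ _
    positivity
  apply le_antisymm
  · have hγ : (0:ℝ) ≤ 1/(2*x-1) := by positivity
    have h := ciInf_le hbdd (⟨1/(2*x-1), hγ⟩ : Set.Ici (0:ℝ))
    refine le_trans h (le_of_eq ?_)
    show p * max 0 (1/(2*x-1) * (1 - 2 * x) + 1) + q * max 0 (1/(2*x-1) * (1 - x) + 1) +
        t * max 0 (1/(2*x-1) + 1) = (q + 2*t) * x / (2*x - 1)
    have hA : 1/(2*x-1) * (1 - 2*x) + 1 = 0 := by field_simp; ring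
    have hBv : 1/(2*x-1) * (1 - x) + 1 = x/(2*x-1) := by field_simp; ring
    have hCv : 1/(2*x-1) + 1 = 2*x/(2*x-1) := by field_simp; ring
    rw [hA, hBv, hCv, max_self, max_eq_right (by positivity), max_eq_right (by positivity)]
    field_simp
    ring
  · apply le_ciInf
    rintro ⟨γ, hγ0⟩
    simp only [Set.mem_Ici] at hγ0
    show (q + 2*t) * x / (2*x - 1) ≤
      p * max 0 (γ * (1 - 2 * x) + 1) + q * max 0 (γ * (1 - x) + 1) + t * max 0 (γ + 1)
    set A := γ * (1 - 2*x) + 1 with hA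
    set Bv := γ * (1 - x) + 1 with hBv
    set C := γ + 1 with hC
    set θ := (q * (1 - x) + t) / (p * (2*x-1)) with hθ
    have hθ0 : 0 ≤ θ := by
      apply div_nonneg hs2; positivity
    have hθ1 : θ ≤ 1 := by
      rw [div_le_one (by positivity)]; nlinarith
    have key : p * θ * A + q * Bv + t * C = (q + 2*t) * x / (2*x-1) := by
      have hpθ : p * θ = (q * (1 - x) + t) / (2*x-1) := by
        rw [hθ, mul_div_assoc', mul_div_mul_left _ _ hp.ne']
      rw [hpθ, hA, hBv, hC, eq_div_iff hd.ne']
      linear_combination (div_mul_cancel₀ ((q * (1 - x) + t) * (γ * (1 - 2*x) + 1)) hd.ne')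
    have hm0 : (0:ℝ) ≤ max 0 A := le_max_left _ _
    have hmA : A ≤ max 0 A := le_max_right _ _
    have h1 : p * θ * A ≤ p * max 0 A := by
      have e1 : p * θ * A ≤ p * θ * max 0 A :=
        mul_le_mul_of_nonneg_left hmA (by positivity)
      have e2 : p * θ * max 0 A ≤ p * 1 * max 0 A := by
        apply mul_le_mul_of_nonneg_right _ hm0
        exact mul_le_mul_of_nonneg_left hθ1 hp.le
      linarith [e1, e2]
    have h2 : q * Bv ≤ q * max 0 Bv :=
      mul_le_mul_of_nonneg_left (le_max_right _ _) hq.le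
    have h3 : t * C ≤ t * max 0 C :=
      mul_le_mul_of_nonneg_left (le_max_right _ _) ht
    clear_value A Bv C θ
    linarith [key, h1, h2, h3]

lemma inf_right_formula (p q t x : ℝ) (hp : 0 ≤ p) (hq : 0 < q) (ht : 0 ≤ t)
    (hx1 : 1 < x) (hs : t ≤ q * (x - 1)) :
    (⨅ γ : Set.Ici (0:ℝ),
      (p * max 0 ((γ : ℝ) * (1 - 2 * x) + 1) + q * max 0 ((γ : ℝ) * (1 - x) + 1) +
        t * max 0 ((γ : ℝ) + 1))) = t * x / (x - 1) := by
  haveI : Nonempty (Set.Ici (0:ℝ)) := ⟨⟨0, Set.self_mem_Ici⟩⟩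
  have hd : (0:ℝ) < x - 1 := by linarith
  have hbdd : BddBelow (Set.range fun γ : Set.Ici (0:ℝ) =>
      (p * max 0 ((γ : ℝ) * (1 - 2 * x) + 1) + q * max 0 ((γ : ℝ) * (1 - x) + 1) +
        t * max 0 ((γ : ℝ) + 1))) := by
    refine ⟨0, ?_⟩
    rintro y ⟨γ, rfl⟩
    have h1 : (0:ℝ) ≤ max 0 ((γ : ℝ) * (1 - 2 * x) + 1) := le_max_left _ _
    have h2 : (0:ℝ) ≤ max 0 ((γ : ℝ) * (1 - x) + 1) := le_max_left _ _
    have h3 : (0:ℝ) ≤ max 0 ((γ : ℝ) + 1) := le_max_left _ _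
    positivity
  apply le_antisymm
  · have hγ : (0:ℝ) ≤ 1/(x-1) := by positivity
    have h := ciInf_le hbdd (⟨1/(x-1), hγ⟩ : Set.Ici (0:ℝ))
    refine le_trans h (le_of_eq ?_)
    show p * max 0 (1/(x-1) * (1 - 2 * x) + 1) + q * max 0 (1/(x-1) * (1 - x) + 1) +
        t * max 0 (1/(x-1) + 1) = t * x / (x - 1)
    have hA : 1/(x-1) * (1 - 2*x) + 1 = (-x)/(x-1) := by field_simp; ring
    have hA' : 1/(x-1) * (1 - 2*x) + 1 ≤ 0 := by
      rw [hA]; exact le_of_lt (div_neg_of_neg_of_pos (by linarith) hd)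
    have hBv : 1/(x-1) * (1 - x) + 1 = 0 := by field_simp; ring
    have hCv : 1/(x-1) + 1 = x/(x-1) := by field_simp; ring
    rw [hBv, max_self, max_eq_left hA', hCv, max_eq_right (by positivity)]
    rw [mul_zero, mul_zero, zero_add, zero_add, mul_div_assoc]
  · apply le_ciInf
    rintro ⟨γ, hγ0⟩
    simp only [Set.mem_Ici] at hγ0
    show t * x / (x - 1) ≤
      p * max 0 (γ * (1 - 2 * x) + 1) + q * max 0 (γ * (1 - x) + 1) + t * max 0 (γ + 1)
    set Bv := γ * (1 - x) + 1 with hBv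
    set C := γ + 1 with hC
    set θ := t / (q * (x-1)) with hθ
    have hθ0 : 0 ≤ θ := by apply div_nonneg ht; positivity
    have hθ1 : θ ≤ 1 := by
      rw [div_le_one (by positivity)]; nlinarith
    have key : q * θ * Bv + t * C = t * x / (x-1) := by
      rw [hθ, hBv, hC]
      field_simp
      ring
    have h1 : (0:ℝ) ≤ p * max 0 (γ * (1 - 2*x) + 1) := by
      have := le_max_left (0:ℝ) (γ * (1 - 2*x) + 1); positivity
    have hm0 : (0:ℝ) ≤ max 0 Bv := le_max_left _ _
    have hmB : Bv ≤ max 0 Bv := le_max_right _ _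
    have h2 : q * θ * Bv ≤ q * max 0 Bv := by
      have e1 : q * θ * Bv ≤ q * θ * max 0 Bv :=
        mul_le_mul_of_nonneg_left hmB (by positivity)
      have e2 : q * θ * max 0 Bv ≤ q * 1 * max 0 Bv := by
        apply mul_le_mul_of_nonneg_right _ hm0
        exact mul_le_mul_of_nonneg_left hθ1 hq.le
      linarith [e1, e2]
    have h3 : t * C ≤ t * max 0 C :=
      mul_le_mul_of_nonneg_left (le_max_right _ _) ht
    clear_value Bv C θ
    linarith [key, h1, h2, h3]

/-- For the four-component network example with component failure
probability `ρ ∈ (0, 1/2)`, `σ = 1 − (1−ρ)⁴ − (1−ρ)³ρ`,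
`τ = 1 − (1−ρ)⁴ − 2(1−ρ)³ρ` and `xhat = (1 − (1−ρ)⁴)/(2(1−ρ)³ρ)`, the buffered
failure probability `B` (Norton–Uryasev formula) has left derivative
`−2σ/(2xhat − 1)²` and right derivative `−τ/(xhat − 1)²` at `xhat`; these two
values are distinct, so `B` is not differentiable at `xhat`. -/
theorem network_buffered_failure_probability_one_sided_derivatives
    (ρ σ τ xhat : ℝ) (hρ : ρ ∈ Set.Ioo (0 : ℝ) (1 / 2))
    (hσ : σ = 1 - (1 - ρ) ^ 4 - (1 - ρ) ^ 3 * ρ)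
    (hτ : τ = 1 - (1 - ρ) ^ 4 - 2 * (1 - ρ) ^ 3 * ρ)
    (hxhat : xhat = (1 - (1 - ρ) ^ 4) / (2 * (1 - ρ) ^ 3 * ρ))
    (B : ℝ → ℝ)
    (hB : B = fun x => ⨅ γ : Set.Ici (0 : ℝ),
      ((1 - ρ) ^ 4 * max 0 ((γ : ℝ) * (1 - 2 * x) + 1) +
        2 * (1 - ρ) ^ 3 * ρ * max 0 ((γ : ℝ) * (1 - x) + 1) +
        τ * max 0 ((γ : ℝ) + 1))) :
    HasDerivWithinAt B (-(2 * σ) / (2 * xhat - 1) ^ 2) (Set.Iic xhat) xhat ∧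
    HasDerivWithinAt B (-τ / (xhat - 1) ^ 2) (Set.Ici xhat) xhat ∧
    -(2 * σ) / (2 * xhat - 1) ^ 2 ≠ -τ / (xhat - 1) ^ 2 ∧
    ¬ DifferentiableAt ℝ B xhat := by
  obtain ⟨hρ0, hρ2⟩ := hρ
  have hρ1 : 0 < 1 - ρ := by linarith
  set p : ℝ := (1 - ρ) ^ 4 with hpdef
  set q : ℝ := 2 * (1 - ρ) ^ 3 * ρ with hqdef
  have hp : 0 < p := by positivity
  have hq : 0 < q := by positivity
  have hτpq : τ = 1 - p - q := hτ
  have ht : 0 < τ := by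
    rw [hτpq, hpdef, hqdef]
    nlinarith [pow_pos hρ1 3, mul_pos hρ0 (pow_pos hρ1 3), sq_nonneg (1 - ρ), sq_nonneg ρ]
  have hqx : q * xhat = 1 - p := by
    rw [hxhat]; field_simp
  have hx1 : 1 < xhat := by
    rw [hxhat, lt_div_iff₀ hq]; rw [hτpq] at ht; linarith
  have h2σ : 2 * σ = q + 2 * τ := by rw [hσ, hτpq, hpdef, hqdef]; ring
  -- formulas for B
  have hBright : ∀ y ∈ Set.Ici xhat, B y = τ * y / (y - 1) := by
    intro y hy
    simp only [Set.mem_Ici] at hy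
    rw [hB]
    exact inf_right_formula p q τ y hp.le hq ht.le (by linarith)
      (by nlinarith [mul_le_mul_of_nonneg_left hy hq.le])
  have hBleftPt : ∀ y, 1 < y → p * (1 - 2*y) + q * (1 - y) + τ ≤ 0 → y ≤ xhat →
      B y = (q + 2*τ) * y / (2*y - 1) := by
    intro y hy1 hys hyx
    rw [hB]
    exact inf_left_formula p q τ y hp hq ht.le hy1 hys
      (by nlinarith [mul_le_mul_of_nonneg_left hyx hq.le])
  have hsl1hat : p * (1 - 2*xhat) + q * (1 - xhat) + τ ≤ 0 := by nlinarith
  -- left derivative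
  have hdleft : HasDerivWithinAt B (-(2 * σ) / (2 * xhat - 1) ^ 2) (Set.Iic xhat) xhat := by
    have hden : 2 * xhat - 1 ≠ 0 := by linarith
    have h1 : HasDerivAt (fun y : ℝ => (q + 2*τ) * y) (q + 2*τ) xhat := by
      simpa using (hasDerivAt_id xhat).const_mul (q + 2*τ)
    have h2 : HasDerivAt (fun y : ℝ => 2 * y - 1) 2 xhat := by
      simpa using ((hasDerivAt_id xhat).const_mul (2:ℝ)).sub_const 1
    have hg := h1.div h2 hden
    have hval : ((q + 2*τ) * (2 * xhat - 1) - (q + 2*τ) * xhat * 2) / (2 * xhat - 1) ^ 2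
        = -(2 * σ) / (2 * xhat - 1) ^ 2 := by
      rw [h2σ]; ring
    rw [hval] at hg
    refine (hg.hasDerivWithinAt).congr_of_eventuallyEq ?_ ?_
    · -- eventual equality on a left neighborhood
      have hc1 : (p + q + τ) / (2*p + q) < xhat := by
        rw [div_lt_iff₀ (by positivity)]; nlinarith
      have hmem : Set.Ioi (max 1 ((p + q + τ) / (2*p + q))) ∈ nhdsWithin xhat (Set.Iic xhat) := by
        apply mem_nhdsWithin_of_mem_nhds
        exact Ioi_mem_nhds (by simp [hx1, hc1])
      filter_upwards [hmem, self_mem_nhdsWithin] with y hy1 hy2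
      simp only [Set.mem_Ioi, max_lt_iff] at hy1
      simp only [Set.mem_Iic] at hy2
      obtain ⟨hya, hyb⟩ := hy1
      have hsl : p * (1 - 2*y) + q * (1 - y) + τ ≤ 0 := by
        rw [div_lt_iff₀ (by positivity)] at hyb
        nlinarith
      exact hBleftPt y hya hsl hy2
    · exact hBleftPt xhat hx1 hsl1hat le_rfl
  -- right derivative
  have hdright : HasDerivWithinAt B (-τ / (xhat - 1) ^ 2) (Set.Ici xhat) xhat := by
    have hden : xhat - 1 ≠ 0 := by linarith
    have h1 : HasDerivAt (fun y : ℝ => τ * y) τ xhat := by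
      simpa using (hasDerivAt_id xhat).const_mul τ
    have h2 : HasDerivAt (fun y : ℝ => y - 1) 1 xhat := (hasDerivAt_id xhat).sub_const 1
    have hg := h1.div h2 hden
    have hval : (τ * (xhat - 1) - τ * xhat * 1) / (xhat - 1) ^ 2
        = -τ / (xhat - 1) ^ 2 := by ring
    rw [hval] at hg
    exact (hg.hasDerivWithinAt).congr hBright (hBright xhat Set.self_mem_Ici)
  -- distinctness
  have key2 : 2 * σ * (xhat - 1) = τ * (2 * xhat - 1) := by
    linear_combination (xhat - 1) * h2σ + hqx - hτpq
  have hne : -(2 * σ) / (2 * xhat - 1) ^ 2 ≠ -τ / (xhat - 1) ^ 2 := by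
    intro h
    have hd1 : (2 * xhat - 1) ≠ 0 := by linarith
    have hd2 : (xhat - 1) ≠ 0 := by linarith
    field_simp at h
    nlinarith [key2, h, mul_pos ht (show (0:ℝ) < 2*xhat - 1 by linarith), hx1, ht]
  refine ⟨hdleft, hdright, hne, ?_⟩
  intro hdiff
  have hD : HasDerivAt B (deriv B xhat) xhat := hdiff.hasDerivAt
  have e1 : derivWithin B (Set.Iic xhat) xhat = -(2 * σ) / (2 * xhat - 1) ^ 2 :=
    hdleft.derivWithin (uniqueDiffOn_Iic xhat xhat Set.self_mem_Iic)
  have e1' : derivWithin B (Set.Iic xhat) xhat = deriv B xhat :=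
    (hD.hasDerivWithinAt).derivWithin (uniqueDiffOn_Iic xhat xhat Set.self_mem_Iic)
  have e2 : derivWithin B (Set.Ici xhat) xhat = -τ / (xhat - 1) ^ 2 :=
    hdright.derivWithin (uniqueDiffOn_Ici xhat xhat Set.self_mem_Ici)
  have e2' : derivWithin B (Set.Ici xhat) xhat = deriv B xhat :=
    (hD.hasDerivWithinAt).derivWithin (uniqueDiffOn_Ici xhat xhat Set.self_mem_Ici)
  exact hne (by rw [← e1, e1', ← e2', e2])
end

section
/- Let ρ ∈ (0, 1/2) and set σ = 1 − (1−ρ)⁴ − (1−ρ)³ρ, τ = 1 − (1−ρ)⁴ − 2(1−ρ)³ρ, and x̂ = (1 − (1−ρ)⁴)/(2(1−ρ)³ρ). Define Y ⊂ ℝ as the set of all numbers of the form γ·( (1−ρ)⁴·μ₁·(−2) + (1−ρ)³ρ·μ₂·(−1) + (1−ρ)³ρ·μ₃·(−1) ) where γ ∈ [1/(2x̂ − 1), 1/(x̂ − 1)], μ₁, μ₂, μ₃ ∈ [0,1] satisfy (1−ρ)⁴·μ₁·(1 − 2x̂) + (1−ρ)³ρ·(μ₂ + μ₃)·(1 − x̂)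 + τ = 0, and additionally μ₁ = 0 if γ(1 − 2x̂) + 1 < 0, μ₁ = 1 if γ(1 − 2x̂) + 1 > 0, and for j = 2, 3: μⱼ = 0 if γ(1 − x̂) + 1 < 0 and μⱼ = 1 if γ(1 − x̂) + 1 > 0. Then Y equals the closed interval [−2σ/(2x̂ − 1)², −τ/(x̂ − 1)²]. -/
/-!
Write `a = (1-ρ)⁴` and `b = (1-ρ)³ρ`. Then `τ = 2b(x̂ - 1)`, `σ = b(2x̂ - 1)` and `x̂ > 1`, and the
constraint on the multipliers is the balance `a(2x̂ - 1)μ₁ = b(x̂ - 1)((1 - μ₂) + (1 - μ₃))`.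
For `γ ∈ Γ(x̂)` the two slackness conditions cannot both be tight, so one side of the balance
vanishes, hence so does the other: the multipliers are always `(0, 1, 1)`. Conversely every
`γ ∈ Γ(x̂)` is admissible with these multipliers, so `Y` is the image of `Γ(x̂)` under `γ ↦ -2bγ`.
-/

open Set

/-- The set `Y`, with the outcome probabilities `(1-ρ)⁴` and `(1-ρ)³ρ` replaced by `a` and `b`. -/
def candidateSubgradients (a b τ x : ℝ) : Set ℝ :=
  {y : ℝ | ∃ γ μ₁ μ₂ μ₃ : ℝ,
      γ ∈ Icc (1 / (2 * x - 1)) (1 / (x - 1)) ∧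
      μ₁ ∈ Icc (0 : ℝ) 1 ∧ μ₂ ∈ Icc (0 : ℝ) 1 ∧ μ₃ ∈ Icc (0 : ℝ) 1 ∧
      a * μ₁ * (1 - 2 * x) + b * (μ₂ + μ₃) * (1 - x) + τ = 0 ∧
      (γ * (1 - 2 * x) + 1 < 0 → μ₁ = 0) ∧
      (0 < γ * (1 - 2 * x) + 1 → μ₁ = 1) ∧
      (γ * (1 - x) + 1 < 0 → μ₂ = 0) ∧
      (0 < γ * (1 - x) + 1 → μ₂ = 1) ∧
      (γ * (1 - x) + 1 < 0 → μ₃ = 0) ∧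
      (0 < γ * (1 - x) + 1 → μ₃ = 1) ∧
      y = γ * (a * μ₁ * (-2) + b * μ₂ * (-1) + b * μ₃ * (-1))}

section

variable {a b x μ₁ μ₂ μ₃ : ℝ}

lemma multipliers_eq_of_slackness {γ : ℝ} (ha : 0 < a) (hb : 0 < b) (hx : 1 < x)
    (hγ : γ ∈ Icc (1 / (2 * x - 1)) (1 / (x - 1))) (hμ₂ : μ₂ ≤ 1) (hμ₃ : μ₃ ≤ 1)
    (h : a * μ₁ * (1 - 2 * x) + b * (μ₂ + μ₃) * (1 - x) + 2 * b * (x - 1) = 0)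
    (h₁ : γ * (1 - 2 * x) + 1 < 0 → μ₁ = 0) (h₂ : 0 < γ * (1 - x) + 1 → μ₂ = 1)
    (h₃ : 0 < γ * (1 - x) + 1 → μ₃ = 1) :
    μ₁ = 0 ∧ μ₂ = 1 ∧ μ₃ = 1 := by
  have hbalance : a * (2 * x - 1) * μ₁ = b * (x - 1) * ((1 - μ₂) + (1 - μ₃)) := by
    linear_combination -h
  have ha' : a * (2 * x - 1) ≠ 0 := (mul_pos ha (by linarith)).ne'
  have hb' : b * (x - 1) ≠ 0 := (mul_pos hb (by linarith)).ne'
  by_cases hslack : 0 < γ * (1 - x) + 1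
  · obtain rfl := h₂ hslack
    obtain rfl := h₃ hslack
    refine ⟨?_, rfl, rfl⟩
    simpa [ha'] using hbalance
  · have hγ₁ : 1 ≤ γ * (2 * x - 1) := (div_le_iff₀ (by linarith)).mp hγ.1
    -- `γ (x - 1) ≥ 1` and `γ x > 0` make the first slackness condition strict.
    have hμ₁ : μ₁ = 0 := h₁ (by nlinarith)
    subst hμ₁
    have hsum : (1 - μ₂) + (1 - μ₃) = 0 := by simpa [hb', eq_comm] using hbalance
    obtain ⟨h₂', h₃'⟩ := (add_eq_zero_iff_of_nonneg (sub_nonneg.mpr hμ₂)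
      (sub_nonneg.mpr hμ₃)).mp hsum
    exact ⟨rfl, by linarith, by linarith⟩

lemma candidateSubgradients_eq_image (ha : 0 < a) (hb : 0 < b) (hx : 1 < x) :
    candidateSubgradients a b (2 * b * (x - 1)) x =
      (fun γ => -(2 * b) * γ) '' Icc (1 / (2 * x - 1)) (1 / (x - 1)) := by
  ext y
  constructor
  · rintro ⟨γ, μ₁, μ₂, μ₃, hγ, -, hμ₂, hμ₃, hcon, h₁, -, -, h₂, -, h₃, rfl⟩
    obtain ⟨rfl, rfl, rfl⟩ :=
      multipliers_eq_of_slackness ha hb hx hγ hμ₂.2 hμ₃.2 hcon h₁ h₂ h₃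
    exact ⟨γ, hγ, by ring⟩
  · rintro ⟨γ, hγ, rfl⟩
    have hγ₁ : 1 ≤ γ * (2 * x - 1) := (div_le_iff₀ (by linarith)).mp hγ.1
    have hγ₂ : γ * (x - 1) ≤ 1 := (le_div_iff₀ (by linarith)).mp hγ.2
    refine ⟨γ, 0, 1, 1, hγ, left_mem_Icc.mpr zero_le_one, right_mem_Icc.mpr zero_le_one,
      right_mem_Icc.mpr zero_le_one, by ring, fun _ => rfl, fun h => ?_, fun h => ?_,
      fun _ => rfl, fun h => ?_, fun _ => rfl, by ring⟩ <;> linarith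

lemma candidateSubgradients_eq_uIcc {τ σ : ℝ} (ha : 0 < a) (hb : 0 < b) (hx : 1 < x)
    (hτ : τ = 2 * b * (x - 1)) (hσ : σ = b * (2 * x - 1)) :
    candidateSubgradients a b τ x = uIcc (-(2 * σ) / (2 * x - 1) ^ 2) (-τ / (x - 1) ^ 2) := by
  have hx₁ : 0 < x - 1 := by linarith
  have hx₂ : 0 < 2 * x - 1 := by linarith
  have hle : 1 / (2 * x - 1) ≤ 1 / (x - 1) := one_div_le_one_div_of_le hx₁ (by linarith)
  rw [hτ, candidateSubgradients_eq_image ha hb hx, ← uIcc_of_le hle, image_const_mul_uIcc, hσ]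
  congr 1 <;> field_simp

end

lemma one_sub_pow_four_add_two_mul_lt_one {ρ : ℝ} (h₀ : 0 < ρ) (h₁ : ρ < 1) :
    (1 - ρ) ^ 4 + 2 * (1 - ρ) ^ 3 * ρ < 1 := by
  have hsq : (1 - ρ) ^ 2 < 1 := by nlinarith
  calc (1 - ρ) ^ 4 + 2 * (1 - ρ) ^ 3 * ρ = (1 - ρ) ^ 2 * (1 - ρ ^ 2) := by ring
    _ < 1 := by nlinarith [sq_nonneg ρ, sq_nonneg (1 - ρ)]

/-- For the four-component network example with component failure
probability `ρ ∈ (0, 1/2)`, `σ = 1 − (1−ρ)⁴ − (1−ρ)³ρ`,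
`τ = 1 − (1−ρ)⁴ − 2(1−ρ)³ρ` and `xhat = (1 − (1−ρ)⁴)/(2(1−ρ)³ρ)`, the set `Y`
of candidate subgradients produced by the multiplier conditions of Theorem 1
equals the closed interval with endpoints `−2σ/(2xhat − 1)²` and
`−τ/(xhat − 1)²` (the convex hull of the two one-sided derivatives). -/
theorem network_candidate_subgradient_set
    (ρ σ τ xhat : ℝ) (hρ : ρ ∈ Set.Ioo (0 : ℝ) (1 / 2))
    (hσ : σ = 1 - (1 - ρ) ^ 4 - (1 - ρ) ^ 3 * ρ)
    (hτ : τ = 1 - (1 - ρ) ^ 4 - 2 * (1 - ρ) ^ 3 * ρ)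
    (hxhat : xhat = (1 - (1 - ρ) ^ 4) / (2 * (1 - ρ) ^ 3 * ρ))
    (Y : Set ℝ)
    (hY : Y = {y : ℝ | ∃ γ μ₁ μ₂ μ₃ : ℝ,
      γ ∈ Set.Icc (1 / (2 * xhat - 1)) (1 / (xhat - 1)) ∧
      μ₁ ∈ Set.Icc (0 : ℝ) 1 ∧ μ₂ ∈ Set.Icc (0 : ℝ) 1 ∧ μ₃ ∈ Set.Icc (0 : ℝ) 1 ∧
      (1 - ρ) ^ 4 * μ₁ * (1 - 2 * xhat)
        + (1 - ρ) ^ 3 * ρ * (μ₂ + μ₃) * (1 - xhat) + τ = 0 ∧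
      (γ * (1 - 2 * xhat) + 1 < 0 → μ₁ = 0) ∧
      (0 < γ * (1 - 2 * xhat) + 1 → μ₁ = 1) ∧
      (γ * (1 - xhat) + 1 < 0 → μ₂ = 0) ∧
      (0 < γ * (1 - xhat) + 1 → μ₂ = 1) ∧
      (γ * (1 - xhat) + 1 < 0 → μ₃ = 0) ∧
      (0 < γ * (1 - xhat) + 1 → μ₃ = 1) ∧
      y = γ * ((1 - ρ) ^ 4 * μ₁ * (-2) + (1 - ρ) ^ 3 * ρ * μ₂ * (-1)
        + (1 - ρ) ^ 3 * ρ * μ₃ * (-1))}) :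
    Y = Set.uIcc (-(2 * σ) / (2 * xhat - 1) ^ 2) (-τ / (xhat - 1) ^ 2) := by
  obtain ⟨hρ₀, hρ₁⟩ := hρ
  have hb : 0 < (1 - ρ) ^ 3 * ρ := mul_pos (pow_pos (by linarith) 3) hρ₀
  have hbx : 2 * ((1 - ρ) ^ 3 * ρ) * xhat = 1 - (1 - ρ) ^ 4 := by
    have hρ' : 1 - ρ ≠ 0 := by linarith
    rw [hxhat]; field_simp
  have hx : 1 < xhat := by
    have hτ₀ := one_sub_pow_four_add_two_mul_lt_one hρ₀ (by linarith)
    nlinarith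
  rw [hY]
  exact candidateSubgradients_eq_uIcc (pow_pos (by linarith) 4) hb hx
    (by linear_combination hτ - hbx) (by linear_combination hσ - hbx)
end

section
/- Let ξ be a random vector with a finite distribution having outcomes ξ¹, …, ξ^ν in ℝ^m and positive probabilities p₁, …, p_ν. Suppose that for each i = 1, …, ν the function g(ξⁱ,·) : ℝ^n → ℝ is continuously differentiable in a neighborhood of x̂, that Σᵢ pᵢ g(ξⁱ,x̂) < 0, and that g(ξⁱ,x̂) > 0 for some i. Then the function p̄(x) = inf_{γ ≥ 0} Σᵢ pᵢ max(0, γ·g(ξⁱ,x) + 1) is Lipschitz continuous on some neighborhood of x̂; i.e., there exist an open set U containing x̂ and a constant L ≥ 0 such that |p̄(x) − p̄(x′)| ≤ L·‖x − x′‖₂ for all x, x′ ∈ U. -/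
open MeasureTheory

lemma max0_sub_le_abs (a b : ℝ) : max 0 a - max 0 b ≤ |a - b| := by
  have h1 : a ≤ max 0 b + |a - b| := by
    have h := le_abs_self (a - b)
    have h' := le_max_right (0:ℝ) b
    linarith
  have h2 : (0:ℝ) ≤ max 0 b + |a - b| := add_nonneg (le_max_left _ _) (abs_nonneg _)
  have := max_le h2 h1
  linarith

/-- For a finite distribution with outcomes `ξ¹, …, ξ^ν` in `ℝ^m`
and positive probabilities `p₁, …, p_ν`, with each `g(ξⁱ,·)` continuously
differentiable near `xhat`, `Σᵢ pᵢ g(ξⁱ,xhat) < 0` and `g(ξⁱ,xhat) > 0` for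
some `i`, the buffered failure probability
`p̄(x) = inf_{γ ≥ 0} Σᵢ pᵢ max(0, γ g(ξⁱ,x) + 1)` is Lipschitz continuous on
some neighborhood of `xhat`. -/
theorem buffered_failure_probability_locally_lipschitz
    {m n ν : ℕ}
    (ξ : Fin ν → EuclideanSpace ℝ (Fin m)) (p : Fin ν → ℝ)
    (hp : ∀ i, 0 < p i) (hpsum : ∑ i, p i = 1)
    (g : EuclideanSpace ℝ (Fin m) → EuclideanSpace ℝ (Fin n) → ℝ)
    (xhat : EuclideanSpace ℝ (Fin n))
    (hsmooth : ∃ U ∈ nhds xhat, ∀ i, ∀ x ∈ U, ContDiffAt ℝ 1 (g (ξ i)) x)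
    (hneg : ∑ i, p i * g (ξ i) xhat < 0)
    (hpos : ∃ i, 0 < g (ξ i) xhat)
    (pbar : EuclideanSpace ℝ (Fin n) → ℝ)
    (hpbar : pbar = fun x => ⨅ γ : Set.Ici (0 : ℝ),
      ∑ i, p i * max 0 ((γ : ℝ) * g (ξ i) x + 1)) :
    ∃ U : Set (EuclideanSpace ℝ (Fin n)), IsOpen U ∧ xhat ∈ U ∧
      ∃ L : ℝ, 0 ≤ L ∧ ∀ x ∈ U, ∀ x' ∈ U, |pbar x - pbar x'| ≤ L * ‖x - x'‖ := by
  classical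
  obtain ⟨j, hj⟩ := hpos
  obtain ⟨U0, hU0, hC⟩ := hsmooth
  -- Lipschitz constants for each g (ξ i) near xhat
  have hL : ∀ i : Fin ν, ∃ Ki : NNReal, ∃ t ∈ nhds xhat,
      LipschitzOnWith Ki (g (ξ i)) t := fun i =>
    (hC i xhat (mem_of_mem_nhds hU0)).exists_lipschitzOnWith
  choose K t ht hlip using hL
  have hT : (⋂ i, t i) ∈ nhds xhat := Filter.iInter_mem.2 ht
  -- continuity of g (ξ j) at xhat
  have hcont : ContinuousAt (g (ξ j)) xhat :=
    (hC j xhat (mem_of_mem_nhds hU0)).continuousAt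
  set c : ℝ := g (ξ j) xhat / 2 with hc
  have hc0 : 0 < c := by positivity
  have hset : {x | c < g (ξ j) x} ∈ nhds xhat := by
    have : Set.Ioi c ∈ nhds (g (ξ j) xhat) := Ioi_mem_nhds (by rw [hc]; linarith)
    exact hcont.preimage_mem_nhds this
  obtain ⟨r, hr, hball⟩ := Metric.mem_nhds_iff.1 (Filter.inter_mem hT hset)
  refine ⟨Metric.ball xhat r, Metric.isOpen_ball, Metric.mem_ball_self hr, ?_⟩
  set Kr : ℝ := ∑ i, p i * (K i : ℝ) with hKr
  have hKr0 : 0 ≤ Kr :=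
    Finset.sum_nonneg fun i _ => mul_nonneg (hp i).le (K i).2
  have hpjc : 0 < p j * c := mul_pos (hp j) hc0
  set Γ : ℝ := 2 / (p j * c) with hΓ
  have hΓ0 : 0 < Γ := by positivity
  refine ⟨Γ * Kr, by positivity, ?_⟩
  -- boundedness below of the family
  have hbdd : ∀ y, BddBelow (Set.range fun γ : Set.Ici (0:ℝ) =>
      ∑ i, p i * max 0 ((γ : ℝ) * g (ξ i) y + 1)) := by
    intro y
    refine ⟨0, ?_⟩
    rintro _ ⟨γ, rfl⟩
    exact Finset.sum_nonneg fun i _ => mul_nonneg (hp i).le (le_max_left _ _)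
  haveI : Nonempty (Set.Ici (0:ℝ)) := ⟨⟨0, Set.self_mem_Ici⟩⟩
  -- pbar ≤ 1
  have hpb1 : ∀ y, pbar y ≤ 1 := by
    intro y
    have h := ciInf_le (hbdd y) (⟨0, Set.self_mem_Ici⟩ : Set.Ici (0:ℝ))
    rw [hpbar]
    calc (⨅ γ : Set.Ici (0:ℝ), ∑ i, p i * max 0 ((γ : ℝ) * g (ξ i) y + 1))
        ≤ ∑ i, p i * max 0 ((0:ℝ) * g (ξ i) y + 1) := h
      _ = 1 := by simp [hpsum]
  -- main one-sided estimate
  have key : ∀ x ∈ Metric.ball xhat r, ∀ x' ∈ Metric.ball xhat r,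
      pbar x - pbar x' ≤ Γ * Kr * ‖x - x'‖ := by
    intro x hx x' hx'
    obtain ⟨hx1, hx2⟩ := hball hx
    obtain ⟨hx1', hx2'⟩ := hball hx'
    replace hx1 : ∀ i, x ∈ t i := Set.mem_iInter.1 hx1
    replace hx1' : ∀ i, x' ∈ t i := Set.mem_iInter.1 hx1'
    replace hx2 : c < g (ξ j) x := hx2
    replace hx2' : c < g (ξ j) x' := hx2'
    have hnn : (0:ℝ) ≤ Γ * Kr * ‖x - x'‖ := by positivity
    have main : pbar x - Γ * Kr * ‖x - x'‖ ≤ pbar x' := by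
      conv_rhs => rw [hpbar]
      refine le_ciInf fun γ => ?_
      obtain ⟨γv, hγv⟩ := γ
      have hγv : (0:ℝ) ≤ γv := hγv
      rcases le_or_gt γv Γ with hcase | hcase
      · -- small γ
        have h1 : pbar x ≤ ∑ i, p i * max 0 (γv * g (ξ i) x + 1) := by
          rw [hpbar]
          exact ciInf_le (hbdd x) (⟨γv, Set.mem_Ici.2 hγv⟩ : Set.Ici (0:ℝ))
        have h2 : ∑ i, p i * max 0 (γv * g (ξ i) x + 1)
            ≤ (∑ i, p i * max 0 (γv * g (ξ i) x' + 1)) + γv * ‖x - x'‖ * Kr := by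
          rw [hKr, Finset.mul_sum, ← Finset.sum_add_distrib]
          refine Finset.sum_le_sum fun i _ => ?_
          have hd : |g (ξ i) x - g (ξ i) x'| ≤ (K i : ℝ) * ‖x - x'‖ := by
            have := (hlip i).dist_le_mul x (hx1 i) x' (hx1' i)
            rwa [Real.dist_eq, dist_eq_norm] at this
          have habs : |(γv * g (ξ i) x + 1) - (γv * g (ξ i) x' + 1)|
              = γv * |g (ξ i) x - g (ξ i) x'| := by
            rw [show (γv * g (ξ i) x + 1) - (γv * g (ξ i) x' + 1)
                = γv * (g (ξ i) x - g (ξ i) x') by ring, abs_mul, abs_of_nonneg hγv]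
          have hdiff : max 0 (γv * g (ξ i) x + 1) - max 0 (γv * g (ξ i) x' + 1)
              ≤ γv * ((K i : ℝ) * ‖x - x'‖) := by
            have h := max0_sub_le_abs (γv * g (ξ i) x + 1) (γv * g (ξ i) x' + 1)
            rw [habs] at h
            exact h.trans (mul_le_mul_of_nonneg_left hd hγv)
          have hpi := (hp i).le
          nlinarith [mul_le_mul_of_nonneg_left hdiff hpi]
        have h3 : γv * ‖x - x'‖ * Kr ≤ Γ * Kr * ‖x - x'‖ := by
          have : γv * ‖x - x'‖ * Kr ≤ Γ * ‖x - x'‖ * Kr := by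
            have := mul_le_mul_of_nonneg_right
              (mul_le_mul_of_nonneg_right hcase (norm_nonneg (x - x'))) hKr0
            exact this
          linarith [this]
        linarith
      · -- large γ : the value is at least 2
        have hterm : p j * (Γ * c) ≤ p j * max 0 (γv * g (ξ j) x' + 1) := by
          have h1 : Γ * c ≤ γv * c := mul_le_mul_of_nonneg_right hcase.le hc0.le
          have h2 : γv * c ≤ γv * g (ξ j) x' := mul_le_mul_of_nonneg_left hx2'.le hγv
          have h3 : γv * g (ξ j) x' + 1 ≤ max 0 (γv * g (ξ j) x' + 1) := le_max_right _ _
          nlinarith [(hp j).le]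
        have htwo : p j * (Γ * c) = 2 := by
          rw [hΓ]; field_simp [(hp j).ne']
        have hsum : p j * max 0 (γv * g (ξ j) x' + 1)
            ≤ ∑ i, p i * max 0 (γv * g (ξ i) x' + 1) :=
          Finset.single_le_sum (f := fun i => p i * max 0 (γv * g (ξ i) x' + 1))
            (fun i _ => mul_nonneg (hp i).le (le_max_left _ _)) (Finset.mem_univ j)
        have := hpb1 x
        linarith
    linarith
  intro x hx x' hx'
  rw [abs_sub_le_iff]
  constructor
  · linarith [key x hx x' hx']
  · have := key x' hx' x hx
    rwa [norm_sub_rev] at this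
end
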